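/- arXiv:1201.1869 — 13 statements merged into one kernel-verified Lean document; each statement's English description precedes it below -/
import Mathlib

section
/- A complete signed graph G = (V, E⁺, E⁻) admits a line embedding (an ordering π of V such that for every u ∈ V there are no u₁ <_π u₂ <_π u with u₁u ∈ E⁺ and u₂u ∈ E⁻, and no u₁ >_π u₂ >_π u with u₁u ∈ E⁺ and u₂u ∈ E⁻) if and only if the positive part G⁺ = (V, E⁺) is a proper interval graph. -/
/-- π is a feasible line embedding of the signed graph (V, Ep, En). -/
def Feasible {V : Type} (Ep En : V → V → Prop) (π : V → ℕ) : Prop :=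
  Function.Injective π ∧
  (∀ u u₁ u₂ : V, π u₁ < π u₂ → π u₂ < π u → Ep u₁ u → ¬ En u₂ u) ∧
  (∀ u u₁ u₂ : V, π u < π u₂ → π u₂ < π u₁ → Ep u₁ u → ¬ En u₂ u)

/-- `l, r` give a proper interval model of the graph with adjacency `E`:
intervals `[l v, r v]` with nonempty interiors, pairwise distinct endpoints,
adjacency iff intervals intersect, and no interval contained in another. -/
def ProperIntervalModel {V : Type} (E : V → V → Prop) (l r : V → ℝ) : Prop :=
  (∀ v, l v < r v) ∧
  (∀ v w : V, v ≠ w → l v ≠ l w ∧ r v ≠ r w) ∧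
  (∀ v w : V, l v ≠ r w) ∧
  (∀ v w : V, v ≠ w → (E v w ↔ (Set.Icc (l v) (r v) ∩ Set.Icc (l w) (r w)).Nonempty)) ∧
  (∀ v w : V, v ≠ w → ¬ (Set.Icc (l v) (r v) ⊆ Set.Icc (l w) (r w)))

/-- A complete signed graph admits a line embedding iff its positive part is a
proper interval graph. -/
theorem complete_line_embedding_iff_proper_interval
    {V : Type} [Fintype V] (Ep En : V → V → Prop)
    (hsymp : ∀ u v, Ep u v → Ep v u) (hsymn : ∀ u v, En u v → En v u)
    (hirrp : ∀ v, ¬ Ep v v) (hirrn : ∀ v, ¬ En v v)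
    (hdisj : ∀ u v, ¬ (Ep u v ∧ En u v))
    (hcomplete : ∀ u v : V, u ≠ v → Ep u v ∨ En u v) :
    (∃ π : V → ℕ, Feasible Ep En π) ↔ (∃ l r : V → ℝ, ProperIntervalModel Ep l r) := by
  classical
  constructor
  · rintro ⟨π, hinj, h1, h2⟩
    -- umbrella properties
    have hUr : ∀ a b c : V, π a < π b → π b < π c → Ep a c → Ep b c := by
      intro a b c hab hbc hac
      have hne : b ≠ c := fun h => absurd (congrArg π h) (Nat.ne_of_lt hbc)
      rcases hcomplete b c hne with h | h
      · exact h
      · exact absurd h (h1 c a b hab hbc hac)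
    have hUl : ∀ a b c : V, π a < π b → π b < π c → Ep a c → Ep a b := by
      intro a b c hab hbc hac
      have hne : a ≠ b := fun h => absurd (congrArg π h) (Nat.ne_of_lt hab)
      rcases hcomplete a b hne with h | h
      · exact h
      · exact absurd (hsymn _ _ h) (h2 a c b hab hbc (hsymp _ _ hac))
    -- the farthest right positive neighbour
    set S : V → Finset ℕ :=
      fun v => (Finset.univ.filter (fun w => w = v ∨ (Ep v w ∧ π v < π w))).image π with hS
    have hne : ∀ v, (S v).Nonempty := by
      intro v
      exact ⟨π v, by simp [hS]⟩
    set m : V → ℕ := fun v => (S v).max' (hne v) with hm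
    have hm_self : ∀ v, π v ≤ m v := by
      intro v
      exact Finset.le_max' _ _ (by simp [hS])
    have hm_ge : ∀ v w, Ep v w → π v < π w → π w ≤ m v := by
      intro v w hp hlt
      refine Finset.le_max' _ _ ?_
      simp only [hS, Finset.mem_image, Finset.mem_filter, Finset.mem_univ, true_and]
      exact ⟨w, Or.inr ⟨hp, hlt⟩, rfl⟩
    have hm_mem : ∀ v, ∃ x, (x = v ∨ (Ep v x ∧ π v < π x)) ∧ π x = m v := by
      intro v
      have hmem : m v ∈ S v := (S v).max'_mem (hne v)
      simp only [hS, Finset.mem_image, Finset.mem_filter, Finset.mem_univ, true_and] at hmem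
      obtain ⟨x, hx1, hx2⟩ := hmem
      exact ⟨x, hx1, hx2⟩
    have hm_mono : ∀ v w, π v < π w → m v ≤ m w := by
      intro v w hvw
      obtain ⟨x, hx1, hx2⟩ := hm_mem v
      rcases hx1 with rfl | ⟨hp, hlt⟩
      · exact le_trans (le_of_lt (hx2 ▸ hvw)) (hm_self w)
      · rcases lt_or_ge (π w) (π x) with h | h
        · have := hUr v w x hvw h hp
          exact hx2 ▸ hm_ge w x this h
        · exact hx2 ▸ le_trans h (hm_self w)
    -- the interval model
    refine ⟨fun v => (π v : ℝ), fun v => (m v : ℝ) + 1 - 1 / ((π v : ℝ) + 2), ?_, ?_, ?_, ?_, ?_⟩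
      <;> dsimp only
    case _ =>
      intro v
      have h1 : (π v : ℝ) ≤ m v := by exact_mod_cast hm_self v
      have h2 : 1 / ((π v : ℝ) + 2) < 1 := by
        rw [div_lt_one (by positivity)]; linarith [Nat.cast_nonneg (α := ℝ) (π v)]
      linarith
    case _ =>
      intro v w hvw
      have hπ : π v ≠ π w := fun h => hvw (hinj h)
      have key : ∀ a b : V, π a < π b →
          (m a : ℝ) + 1 - 1 / ((π a : ℝ) + 2) < (m b : ℝ) + 1 - 1 / ((π b : ℝ) + 2) := by
        intro a b hab
        have hmab : (m a : ℝ) ≤ m b := by exact_mod_cast hm_mono a b hab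
        have hcast : ((π a : ℝ) + 2) < ((π b : ℝ) + 2) := by
          have : (π a : ℝ) < π b := by exact_mod_cast hab
          linarith
        have hfrac : 1 / ((π b : ℝ) + 2) < 1 / ((π a : ℝ) + 2) :=
          one_div_lt_one_div_of_lt (by positivity) hcast
        linarith
      constructor
      · exact fun h => hπ (by exact_mod_cast h)
      · rcases hπ.lt_or_gt with h | h
        · exact ne_of_lt (key v w h)
        · exact (ne_of_lt (key w v h)).symm
    case _ =>
      intro v w h
      have hfpos : 0 < 1 / ((π w : ℝ) + 2) := by positivity
      have hflt : 1 / ((π w : ℝ) + 2) < 1 := by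
        rw [div_lt_one (by positivity)]; linarith [Nat.cast_nonneg (α := ℝ) (π w)]
      have h1 : (m w : ℝ) < (π v : ℝ) := by rw [h]; linarith
      have h2 : (π v : ℝ) < (m w : ℝ) + 1 := by
        rw [h]; linarith
      have h1' : m w < π v := by exact_mod_cast h1
      have h2' : π v < m w + 1 := by exact_mod_cast h2
      omega
    case _ =>
      have key : ∀ v w : V, π v < π w →
          (Ep v w ↔ (Set.Icc ((π v : ℝ)) ((m v : ℝ) + 1 - 1 / ((π v : ℝ) + 2)) ∩
            Set.Icc ((π w : ℝ)) ((m w : ℝ) + 1 - 1 / ((π w : ℝ) + 2))).Nonempty) := by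
        intro v w hvw
        have hfvpos : 0 < 1 / ((π v : ℝ) + 2) := by positivity
        have hfvlt : 1 / ((π v : ℝ) + 2) < 1 := by
          rw [div_lt_one (by positivity)]; linarith [Nat.cast_nonneg (α := ℝ) (π v)]
        have hfwpos : 0 < 1 / ((π w : ℝ) + 2) := by positivity
        have hfwlt : 1 / ((π w : ℝ) + 2) < 1 := by
          rw [div_lt_one (by positivity)]; linarith [Nat.cast_nonneg (α := ℝ) (π w)]
        have hmvw : (m v : ℝ) ≤ m w := by exact_mod_cast hm_mono v w hvw
        have hπvw : (π v : ℝ) < (π w : ℝ) := by exact_mod_cast hvw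
        have hπmw : (π w : ℝ) ≤ (m w : ℝ) := by exact_mod_cast hm_self w
        constructor
        · intro hp
          have hle : π w ≤ m v := hm_ge v w hp hvw
          have hle' : (π w : ℝ) ≤ (m v : ℝ) := by exact_mod_cast hle
          refine ⟨(π w : ℝ), ⟨le_of_lt hπvw, by linarith⟩, ⟨le_refl _, by linarith⟩⟩
        · rintro ⟨x, ⟨hx1, hx2⟩, ⟨hx3, hx4⟩⟩
          have : (π w : ℝ) < (m v : ℝ) + 1 := by linarith
          have hle : π w ≤ m v := by
            have : π w < m v + 1 := by exact_mod_cast this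
            omega
          obtain ⟨y, hy1, hy2⟩ := hm_mem v
          rcases hy1 with rfl | ⟨hp, hlt⟩
          · omega
          · rcases lt_or_eq_of_le (hy2 ▸ hle : π w ≤ π y) with h | h
            · exact hUl v w y hvw h hp
            · exact (hinj h) ▸ hp
      intro v w hvw
      have hπ : π v ≠ π w := fun h => hvw (hinj h)
      rcases hπ.lt_or_gt with h | h
      · exact key v w h
      · rw [Set.inter_comm]
        constructor
        · intro hp; exact (key w v h).mp (hsymp _ _ hp)
        · intro hp; exact hsymp _ _ ((key w v h).mpr hp)
    case _ =>
      intro v w hvw hsub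
      have hπ : π v ≠ π w := fun h => hvw (hinj h)
      have hlr : ∀ u : V, (π u : ℝ) < (m u : ℝ) + 1 - 1 / ((π u : ℝ) + 2) := by
        intro u
        have h1 : (π u : ℝ) ≤ m u := by exact_mod_cast hm_self u
        have h2 : 1 / ((π u : ℝ) + 2) < 1 := by
          rw [div_lt_one (by positivity)]; linarith [Nat.cast_nonneg (α := ℝ) (π u)]
        linarith
      rcases hπ.lt_or_gt with h | h
      · have hmem := hsub (Set.left_mem_Icc.mpr (le_of_lt (hlr v)))
        have : (π w : ℝ) ≤ (π v : ℝ) := hmem.1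
        have : (π w : ℝ) < (π v : ℝ) + 1 := by linarith
        have : π w < π v + 1 := by exact_mod_cast this
        omega
      · have hmem := hsub (Set.right_mem_Icc.mpr (le_of_lt (hlr v)))
        have hkey : (m v : ℝ) + 1 - 1 / ((π v : ℝ) + 2) ≤ (m w : ℝ) + 1 - 1 / ((π w : ℝ) + 2) :=
          hmem.2
        have hmwv : (m w : ℝ) ≤ m v := by exact_mod_cast hm_mono w v h
        have hcast : ((π w : ℝ) + 2) < ((π v : ℝ) + 2) := by
          have : (π w : ℝ) < π v := by exact_mod_cast h
          linarith
        have hfrac : 1 / ((π v : ℝ) + 2) < 1 / ((π w : ℝ) + 2) :=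
          one_div_lt_one_div_of_lt (by positivity) hcast
        linarith
  · rintro ⟨l, r, hlt, hdist, hlne, hadj, hncont⟩
    have hlinj : ∀ v w : V, l v = l w → v = w := by
      intro v w h
      by_contra hne
      exact (hdist v w hne).1 h
    have hlr : ∀ v w : V, l v < l w → r v < r w := by
      intro v w h
      have hne : v ≠ w := fun he => absurd (he ▸ h) (lt_irrefl _)
      by_contra hle
      push_neg at hle
      exact hncont w v hne.symm (Set.Icc_subset_Icc (le_of_lt h) hle)
    set π : V → ℕ := fun v => (Finset.univ.filter (fun w => l w < l v)).card with hπ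
    have hmono : ∀ v w : V, l v < l w → π v < π w := by
      intro v w h
      apply Finset.card_lt_card
      rw [Finset.ssubset_iff_of_subset]
      · refine ⟨v, ?_, ?_⟩
        · simp [h]
        · simp
      · intro u hu
        simp only [Finset.mem_filter, Finset.mem_univ, true_and] at hu ⊢
        exact lt_trans hu h
    have hrev : ∀ v w : V, π v < π w → l v < l w := by
      intro v w h
      rcases lt_trichotomy (l v) (l w) with hh | hh | hh
      · exact hh
      · exact absurd (hlinj v w hh ▸ h) (lt_irrefl _)
      · exact absurd (lt_trans (hmono w v hh) h) (lt_irrefl _)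
    refine ⟨π, ?_, ?_, ?_⟩
    · intro a b h
      by_contra hne
      rcases lt_trichotomy (l a) (l b) with hh | hh | hh
      · exact absurd (h ▸ hmono a b hh) (lt_irrefl _)
      · exact hne (hlinj a b hh)
      · exact absurd (h ▸ hmono b a hh) (lt_irrefl _)
    · intro u u₁ u₂ h12 h2u hp
      have hne2u : u₂ ≠ u := fun h => absurd (h ▸ h2u) (lt_irrefl _)
      have hne1u : u₁ ≠ u := fun h => absurd (h ▸ lt_trans h12 h2u) (lt_irrefl _)
      have hl12 : l u₁ < l u₂ := hrev _ _ h12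
      have hl2u : l u₂ < l u := hrev _ _ h2u
      obtain ⟨x, ⟨hx1, hx2⟩, ⟨hx3, hx4⟩⟩ := (hadj u₁ u hne1u).mp hp
      have hur : l u ≤ r u₁ := le_trans hx3 hx2
      have hr12 : r u₁ < r u₂ := hlr _ _ hl12
      have hEp : Ep u₂ u := by
        refine (hadj u₂ u hne2u).mpr ⟨l u, ⟨le_of_lt hl2u, by linarith⟩,
          ⟨le_refl _, le_of_lt (hlt u)⟩⟩
      exact fun hEn => hdisj u₂ u ⟨hEp, hEn⟩
    · intro u u₁ u₂ hu2 h21 hp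
      have hne2u : u₂ ≠ u := fun h => absurd (h ▸ hu2) (lt_irrefl _)
      have hne1u : u₁ ≠ u := fun h => absurd (h ▸ lt_trans hu2 h21) (lt_irrefl _)
      have hlu2 : l u < l u₂ := hrev _ _ hu2
      have hl21 : l u₂ < l u₁ := hrev _ _ h21
      obtain ⟨x, ⟨hx1, hx2⟩, ⟨hx3, hx4⟩⟩ := (hadj u₁ u hne1u).mp hp
      have hur : l u₁ ≤ r u := le_trans hx1 hx4
      have hEp : Ep u₂ u := by
        refine (hadj u₂ u hne2u).mpr ⟨l u₂, ⟨le_refl _, le_of_lt (hlt u₂)⟩,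
          ⟨le_of_lt hlu2, by linarith⟩⟩
      exact fun hEn => hdisj u₂ u ⟨hEp, hEn⟩
end

section
/- Let G = (V, E⁺, E⁻) be a complete signed graph admitting a feasible line embedding π. For each v ∈ V, let v→ be the last vertex (with respect to π) in the closed positive neighbourhood of v, and define the interval I_v = [π(v), π(v→) + π(v)/(|V|+1)]. Then the family {I_v : v ∈ V} is a proper interval model of G⁺ = (V, E⁺): for all distinct v, w, the edge vw ∈ E⁺ if and only if I_v ∩ I_w ≠ ∅, and no interval I_v is contained in another I_w. -/
/-- From a feasible line embedding of a complete signed graph, the intervals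
`I_v = [π(v), π(v→) + π(v)/(|V|+1)]` form a proper interval model of the
positive part.  Here `π : V ≃ Fin n` is the ordering (with values shifted to
`{1, …, n}` when viewed as reals), and `vr v` is the π-last vertex of the closed
positive neighbourhood of `v`. -/
theorem proper_interval_model_from_embedding
    {V : Type} [Fintype V] (Ep En : V → V → Prop)
    (hsymp : ∀ u v, Ep u v → Ep v u) (hsymn : ∀ u v, En u v → En v u)
    (hirrp : ∀ v, ¬ Ep v v) (hirrn : ∀ v, ¬ En v v)
    (hdisj : ∀ u v, ¬ (Ep u v ∧ En u v))
    (hcomplete : ∀ u v : V, u ≠ v → Ep u v ∨ En u v)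
    (π : V ≃ Fin (Fintype.card V))
    (hfeas₁ : ∀ u u₁ u₂ : V, π u₁ < π u₂ → π u₂ < π u → Ep u₁ u → ¬ En u₂ u)
    (hfeas₂ : ∀ u u₁ u₂ : V, π u < π u₂ → π u₂ < π u₁ → Ep u₁ u → ¬ En u₂ u)
    (vr : V → V)
    (hvrmem : ∀ v, Ep v (vr v) ∨ vr v = v)
    (hvrmax : ∀ v w, (Ep v w ∨ w = v) → π w ≤ π (vr v))
    (l r : V → ℝ)
    (hl : ∀ v, l v = ((π v : ℕ) : ℝ) + 1)
    (hr : ∀ v, r v = ((π (vr v) : ℕ) : ℝ) + 1 +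
      (((π v : ℕ) : ℝ) + 1) / ((Fintype.card V : ℝ) + 1)) :
    (∀ v w : V, v ≠ w →
        (Ep v w ↔ (Set.Icc (l v) (r v) ∩ Set.Icc (l w) (r w)).Nonempty)) ∧
    (∀ v w : V, v ≠ w → ¬ (Set.Icc (l v) (r v) ⊆ Set.Icc (l w) (r w))) := by
  classical
  have hN : (0:ℝ) < (Fintype.card V : ℝ) + 1 := by positivity
  have hpb : ∀ v : V, ((π v : ℕ) : ℝ) + 1 < (Fintype.card V : ℝ) + 1 := by
    intro v
    have h := (π v).isLt
    have h' : ((π v : ℕ) : ℝ) < (Fintype.card V : ℝ) := by exact_mod_cast h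
    linarith
  have hfrac0 : ∀ v : V, 0 < (((π v : ℕ) : ℝ) + 1) / ((Fintype.card V : ℝ) + 1) := by
    intro v; positivity
  have hfrac1 : ∀ v : V, (((π v : ℕ) : ℝ) + 1) / ((Fintype.card V : ℝ) + 1) < 1 := by
    intro v; rw [div_lt_one hN]; exact hpb v
  have hvrv : ∀ v, π v ≤ π (vr v) := fun v => hvrmax v v (Or.inr rfl)
  have hlr : ∀ v, l v ≤ r v := by
    intro v
    rw [hl, hr]
    have h1 : (π v : ℕ) ≤ (π (vr v) : ℕ) := hvrv v
    have h1' : ((π v : ℕ):ℝ) ≤ ((π (vr v) : ℕ):ℝ) := by exact_mod_cast h1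
    have := hfrac0 v
    linarith
  have key : ∀ v w : V, π v < π w →
      (Ep v w ↔ (Set.Icc (l v) (r v) ∩ Set.Icc (l w) (r w)).Nonempty) := by
    intro v w hvw
    have hne : v ≠ w := fun h => by subst h; exact lt_irrefl _ hvw
    have hvwℝ : ((π v : ℕ):ℝ) < ((π w : ℕ):ℝ) := by exact_mod_cast hvw
    constructor
    · intro hE
      have h1 : π w ≤ π (vr v) := hvrmax v w (Or.inl hE)
      have h1' : ((π w : ℕ):ℝ) ≤ ((π (vr v) : ℕ):ℝ) := by exact_mod_cast h1
      refine ⟨l w, ⟨?_, ?_⟩, le_rfl, hlr w⟩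
      · rw [hl, hl]; linarith
      · rw [hl, hr]; have := hfrac0 v; linarith
    · rintro ⟨x, ⟨hx1, hx2⟩, hx3, hx4⟩
      have hlwrv : l w ≤ r v := le_trans hx3 hx2
      rw [hl, hr] at hlwrv
      have hf1 := hfrac1 v
      have hcast : ((π w : ℕ):ℝ) < ((π (vr v) : ℕ):ℝ) + 1 := by linarith
      have hcastn : (π w : ℕ) < (π (vr v) : ℕ) + 1 := by exact_mod_cast hcast
      have hπle : (π w : ℕ) ≤ (π (vr v) : ℕ) := Nat.lt_add_one_iff.mp hcastn
      by_contra hnE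
      have hEn : En v w := (hcomplete v w hne).resolve_left hnE
      rcases lt_or_eq_of_le hπle with hlt | heq
      · -- π w < π (vr v)
        have hvrne : vr v ≠ v := by
          intro h
          have : (π w : ℕ) < (π v : ℕ) := by rw [← h]; exact hlt
          have : (π v : ℕ) < (π w : ℕ) := hvw
          omega
        have hEp : Ep v (vr v) := (hvrmem v).resolve_right hvrne
        exact hfeas₂ v (vr v) w hvw hlt (hsymp _ _ hEp) (hsymn _ _ hEn)
      · -- w = vr v
        have hweq : w = vr v := π.injective (Fin.ext heq)
        have hvrne : vr v ≠ v := by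
          intro h; rw [h] at hweq; exact hne hweq.symm
        have hEp : Ep v (vr v) := (hvrmem v).resolve_right hvrne
        rw [← hweq] at hEp
        exact hnE hEp
  refine ⟨?_, ?_⟩
  · intro v w hne
    rcases lt_trichotomy (π v) (π w) with h | h | h
    · exact key v w h
    · exact absurd (π.injective h) hne
    · have hk := key w v h
      rw [Set.inter_comm]
      exact ⟨fun hE => hk.mp (hsymp _ _ hE), fun h2 => hsymp _ _ (hk.mpr h2)⟩
  · intro v w hne hsub
    have h1 := hsub ⟨le_rfl, hlr v⟩
    have h2 := hsub ⟨hlr v, le_rfl⟩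
    have hlw : l w ≤ l v := h1.1
    have hrv : r v ≤ r w := h2.2
    rw [hl, hl] at hlw
    have hwvn : (π w : ℕ) ≤ (π v : ℕ) := by exact_mod_cast (by linarith : ((π w:ℕ):ℝ) ≤ ((π v:ℕ):ℝ))
    have hwvne : (π w : ℕ) ≠ (π v : ℕ) := by
      intro h; exact hne (π.injective (Fin.ext h.symm))
    have hwv : π w < π v := by
      have : (π w : ℕ) < (π v : ℕ) := lt_of_le_of_ne hwvn hwvne
      exact this
    have hwvℝ : ((π w : ℕ):ℝ) < ((π v : ℕ):ℝ) := by exact_mod_cast hwv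
    -- from r v ≤ r w deduce π (vr v) < π (vr w)
    rw [hr, hr] at hrv
    have hdiv : (((π w : ℕ):ℝ) + 1) / ((Fintype.card V : ℝ) + 1)
        < (((π v : ℕ):ℝ) + 1) / ((Fintype.card V : ℝ) + 1) := by
      apply div_lt_div_of_pos_right (by linarith) hN
    have hvrℝ : ((π (vr v) : ℕ):ℝ) < ((π (vr w) : ℕ):ℝ) := by linarith
    have hvrlt : π (vr v) < π (vr w) := by
      have : (π (vr v) : ℕ) < (π (vr w) : ℕ) := by exact_mod_cast hvrℝ
      exact this
    have h4 : π v < π (vr w) := lt_of_le_of_lt (hvrv v) hvrlt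
    have hvwne : vr w ≠ w := by
      intro h
      have : π (vr w) = π w := by rw [h]
      rw [this] at h4
      exact absurd (lt_trans hwv h4) (lt_irrefl _)
    have hEpw : Ep w (vr w) := (hvrmem w).resolve_right hvwne
    have hnotEn : ¬ En v (vr w) := hfeas₁ (vr w) w v hwv h4 hEpw
    have hvne : v ≠ vr w := by
      intro h; rw [← h] at h4; exact lt_irrefl _ h4
    have hEp : Ep v (vr w) := (hcomplete v (vr w) hvne).resolve_right hnotEn
    have := hvrmax v (vr w) (Or.inl hEp)
    exact absurd hvrlt (not_lt.mpr this)
end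

section
/- Given a set system (𝓕, U) with 𝓕 ⊆ 2^U, construct a directed graph D as follows: for every F ∈ 𝓕 and u ∈ F introduce a vertex c_u^F, and connect the vertices {c_u^F : u ∈ F} into a directed cycle (in some fixed order); for every u ∈ U introduce a vertex d_u, and for every vertex c_u^F add both arcs (d_u, c_u^F) and (c_u^F, d_u). Then there exists X ⊆ U such that every F ∈ 𝓕 contains both an element of X and an element of U \ X, if and only if the vertex set of D can be partitioned into two sets V₁, V₂ such that both induced directed subgraphs D[V₁] and D[V₂] are acyclic. -/
/-- The arc relation of the digraph built from a set system `(𝓕, U)`: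
vertices are `d_u` (`Sum.inl u`) and `c_u^F` (`Sum.inr ⟨(F, u), _⟩`);
for each `F ∈ 𝓕` the vertices `c_u^F` are joined into a directed cycle whose
successor function is `cyc F`, and each `d_u` is joined to each `c_u^F` by arcs
in both directions. -/
def setSplitArc {U : Type} [DecidableEq U] (𝓕 : Finset (Finset U))
    (cyc : Finset U → U → U) :
    (U ⊕ {p : Finset U × U // p.1 ∈ 𝓕 ∧ p.2 ∈ p.1}) →
    (U ⊕ {p : Finset U × U // p.1 ∈ 𝓕 ∧ p.2 ∈ p.1}) → Prop
  | Sum.inl u, Sum.inr c => u = c.1.2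
  | Sum.inr c, Sum.inl u => u = c.1.2
  | Sum.inr c, Sum.inr c' => c.1.1 = c'.1.1 ∧ c'.1.2 = cyc c.1.1 c.1.2
  | Sum.inl _, Sum.inl _ => False

section Aux

variable {U : Type} [DecidableEq U] {𝓕 : Finset (Finset U)} {cyc : Finset U → U → U}

/-- Structure of any path inside a part `W` that separates `d_u` from `c_u^F`
according to `Y`. -/
lemma setSplit_path_struct
    (Y : Set U)
    (W : Set (U ⊕ {p : Finset U × U // p.1 ∈ 𝓕 ∧ p.2 ∈ p.1}))
    (hW1 : ∀ u, (Sum.inl u ∈ W) ↔ u ∈ Y)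
    (hW2 : ∀ c, (Sum.inr c ∈ W) ↔ c.1.2 ∉ Y)
    {x y} (h : Relation.TransGen (fun a b => setSplitArc 𝓕 cyc a b ∧ a ∈ W ∧ b ∈ W) x y) :
    ∃ c c' : {p : Finset U × U // p.1 ∈ 𝓕 ∧ p.2 ∈ p.1}, x = Sum.inr c ∧ y = Sum.inr c' ∧
      c.1.1 = c'.1.1 ∧ ∃ k, 1 ≤ k ∧ (cyc c.1.1)^[k] c.1.2 = c'.1.2 ∧
      ∀ i ≤ k, (cyc c.1.1)^[i] c.1.2 ∉ Y := by
  induction h with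
  | single hab =>
    obtain ⟨harc, ha, hb⟩ := hab
    rename_i b
    match x, b with
    | Sum.inl u, Sum.inl v => exact absurd harc id
    | Sum.inl u, Sum.inr c =>
      exact absurd ((hW1 u).1 ha) (harc ▸ (hW2 c).1 hb)
    | Sum.inr c, Sum.inl u =>
      exact absurd ((hW1 u).1 hb) (harc ▸ (hW2 c).1 ha)
    | Sum.inr c, Sum.inr c' =>
      refine ⟨c, c', rfl, rfl, harc.1, 1, le_refl 1, by simp [harc.2], ?_⟩
      intro i hi
      interval_cases i
      · simpa using (hW2 c).1 ha
      · simpa [harc.2] using (hW2 c').1 hb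
  | tail hxy hyz ih =>
    obtain ⟨c, c', hx, hy, hF, k, hk1, hkit, hkY⟩ := ih
    obtain ⟨harc, ha, hb⟩ := hyz
    rename_i y' z
    subst hx hy
    match z with
    | Sum.inl u =>
      exact absurd ((hW1 u).1 hb) (harc ▸ (hW2 c').1 ha)
    | Sum.inr c'' =>
      refine ⟨c, c'', rfl, rfl, hF.trans harc.1, k + 1, by omega, ?_, ?_⟩
      · rw [Function.iterate_succ_apply', hkit, hF, ← harc.2]
      · intro i hi
        rcases Nat.lt_or_ge i (k + 1) with h | h
        · exact hkY i (by omega)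
        · have : i = k + 1 := by omega
          subst this
          rw [Function.iterate_succ_apply', hkit, hF, ← harc.2]
          exact (hW2 c'').1 hb

lemma setSplit_noLoop
    (hcycle : ∀ S ∈ 𝓕, ∀ u ∈ S, ∀ v ∈ S, ∃ k : ℕ, (cyc S)^[k] u = v)
    (Y : Set U) (hY : ∀ S ∈ 𝓕, ∃ a ∈ S, a ∈ Y)
    (W : Set (U ⊕ {p : Finset U × U // p.1 ∈ 𝓕 ∧ p.2 ∈ p.1}))
    (hW1 : ∀ u, (Sum.inl u ∈ W) ↔ u ∈ Y)
    (hW2 : ∀ c, (Sum.inr c ∈ W) ↔ c.1.2 ∉ Y)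
    (x) : ¬ Relation.TransGen (fun a b => setSplitArc 𝓕 cyc a b ∧ a ∈ W ∧ b ∈ W) x x := by
  intro h
  obtain ⟨c, c', hx, hy, hF, k, hk1, hkit, hkY⟩ := setSplit_path_struct Y W hW1 hW2 h
  have hcc' : c = c' := by rw [hx] at hy; exact Sum.inr.inj hy
  subst hcc'
  obtain ⟨a, haS, haY⟩ := hY c.1.1 c.2.1
  obtain ⟨m, hm⟩ := hcycle c.1.1 c.2.1 c.1.2 c.2.2 a haS
  -- reduce m modulo k
  have hfix : ∀ q, (cyc c.1.1)^[k * q] c.1.2 = c.1.2 := by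
    intro q
    rw [Function.iterate_mul]
    exact Function.iterate_fixed hkit q
  have : (cyc c.1.1)^[m % k] c.1.2 = a := by
    conv_rhs => rw [← hm, ← Nat.div_add_mod m k]
    rw [Nat.add_comm, Function.iterate_add_apply, hfix]
  have h2 := hkY (m % k) (le_of_lt (Nat.mod_lt m (by omega)))
  rw [this] at h2
  exact h2 haY

end Aux

section Aux2
variable {U : Type} [DecidableEq U] {𝓕 : Finset (Finset U)} {cyc : Finset U → U → U}

lemma setSplit_chain
    (hmem : ∀ S ∈ 𝓕, ∀ u ∈ S, cyc S u ∈ S)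
    (W : Set (U ⊕ {p : Finset U × U // p.1 ∈ 𝓕 ∧ p.2 ∈ p.1}))
    {S : Finset U} (hS : S ∈ 𝓕)
    (hall : ∀ (c : {p : Finset U × U // p.1 ∈ 𝓕 ∧ p.2 ∈ p.1}), c.1.1 = S → Sum.inr c ∈ W)
    {u : U} (hu : u ∈ S) :
    ∀ n, 1 ≤ n → ∀ v, ∀ hv : v ∈ S, (cyc S)^[n] u = v →
    Relation.TransGen (fun a b => setSplitArc 𝓕 cyc a b ∧ a ∈ W ∧ b ∈ W)
      (Sum.inr ⟨(S, u), hS, hu⟩) (Sum.inr ⟨(S, v), hS, hv⟩) := by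
  have hiter : ∀ n, (cyc S)^[n] u ∈ S := by
    intro n
    induction n with
    | zero => exact hu
    | succ m ih => rw [Function.iterate_succ_apply']; exact hmem S hS _ ih
  intro n
  induction n with
  | zero => omega
  | succ m ih =>
    intro _ v hv hveq
    rcases Nat.eq_zero_or_pos m with hm | hm
    · subst hm
      have hveq' : cyc S u = v := by simpa using hveq
      exact Relation.TransGen.single
        ⟨⟨rfl, hveq'.symm⟩, hall _ rfl, hall _ rfl⟩
    · have hmid : (cyc S)^[m] u ∈ S := hiter m
      refine Relation.TransGen.tail (ih hm _ hmid rfl) ?_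
      rw [Function.iterate_succ_apply'] at hveq
      exact ⟨⟨rfl, hveq.symm⟩, hall _ rfl, hall _ rfl⟩

end Aux2

/-- The set system `(𝓕, U)` has a splitting set iff the vertex set of the
constructed digraph can be partitioned into two parts, each inducing an acyclic
digraph.  `cyc F` is required to be a single cyclic permutation of the elements
of each `F ∈ 𝓕` (each of which has at least two elements). -/
theorem setSplitting_iff_acyclicPartition
    {U : Type} [DecidableEq U] [Fintype U] (𝓕 : Finset (Finset U))
    (hcard : ∀ S ∈ 𝓕, 2 ≤ S.card)
    (cyc : Finset U → U → U)
    (hmem : ∀ S ∈ 𝓕, ∀ u ∈ S, cyc S u ∈ S)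
    (hcycle : ∀ S ∈ 𝓕, ∀ u ∈ S, ∀ v ∈ S, ∃ k : ℕ, (cyc S)^[k] u = v) :
    (∃ X : Set U, ∀ S ∈ 𝓕, (∃ a ∈ S, a ∈ X) ∧ (∃ b ∈ S, b ∉ X)) ↔
    (∃ V₁ : Set (U ⊕ {p : Finset U × U // p.1 ∈ 𝓕 ∧ p.2 ∈ p.1}),
      (∀ x, ¬ Relation.TransGen
        (fun a b => setSplitArc 𝓕 cyc a b ∧ a ∈ V₁ ∧ b ∈ V₁) x x) ∧
      (∀ x, ¬ Relation.TransGen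
        (fun a b => setSplitArc 𝓕 cyc a b ∧ a ∉ V₁ ∧ b ∉ V₁) x x)) := by
  constructor
  · rintro ⟨X, hX⟩
    refine ⟨fun v => match v with
      | Sum.inl u => u ∈ X
      | Sum.inr c => c.1.2 ∉ X, ?_, ?_⟩
    · exact setSplit_noLoop hcycle X (fun S hS => (hX S hS).1)
        _ (fun u => Iff.rfl) (fun c => Iff.rfl)
    · exact setSplit_noLoop hcycle Xᶜ (fun S hS => (hX S hS).2)
        _ (fun u => Iff.rfl) (fun c => Iff.rfl)
  · rintro ⟨V₁, h1, h2⟩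
    have hopp : ∀ c : {p : Finset U × U // p.1 ∈ 𝓕 ∧ p.2 ∈ p.1},
        Sum.inr c ∈ V₁ ↔ Sum.inl c.1.2 ∉ V₁ := by
      intro c
      constructor
      · intro hc hd
        refine h1 (Sum.inl c.1.2) (Relation.TransGen.tail (b := Sum.inr c) (.single ?_) ?_)
        · exact ⟨rfl, hd, hc⟩
        · exact ⟨rfl, hc, hd⟩
      · intro hd
        by_contra hc
        refine h2 (Sum.inl c.1.2) (Relation.TransGen.tail (b := Sum.inr c) (.single ?_) ?_)
        · exact ⟨rfl, hd, hc⟩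
        · exact ⟨rfl, hc, hd⟩
    refine ⟨{u | Sum.inl u ∈ V₁}, fun S hS => ⟨?_, ?_⟩⟩
    · by_contra h
      push_neg at h
      -- all c-vertices of S are in V₁; find a cycle in V₁
      have hall : ∀ (c : {p : Finset U × U // p.1 ∈ 𝓕 ∧ p.2 ∈ p.1}),
          c.1.1 = S → Sum.inr c ∈ V₁ := by
        intro c hcS
        refine (hopp c).2 (h c.1.2 (hcS ▸ c.2.2))
      obtain ⟨u, hu, v, hv, huv⟩ := Finset.one_lt_card.1 (hcard S hS)
      obtain ⟨k, hk⟩ := hcycle S hS u hu v hv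
      obtain ⟨m, hm⟩ := hcycle S hS v hv u hu
      have hk1 : 1 ≤ k := by
        rcases Nat.eq_zero_or_pos k with h0 | h0
        · subst h0; simp at hk; exact absurd hk huv
        · exact h0
      have hloop : (cyc S)^[m + k] u = u := by
        rw [Function.iterate_add_apply, hk, hm]
      exact h1 _ (setSplit_chain hmem V₁ hS hall hu (m + k) (by omega) u hu hloop)
    · by_contra h
      push_neg at h
      have hall : ∀ (c : {p : Finset U × U // p.1 ∈ 𝓕 ∧ p.2 ∈ p.1}),
          c.1.1 = S → Sum.inr c ∈ (V₁ᶜ : Set _) := by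
        intro c hcS
        exact fun hc => (hopp c).1 hc (h c.1.2 (hcS ▸ c.2.2))
      obtain ⟨u, hu, v, hv, huv⟩ := Finset.one_lt_card.1 (hcard S hS)
      obtain ⟨k, hk⟩ := hcycle S hS u hu v hv
      obtain ⟨m, hm⟩ := hcycle S hS v hv u hu
      have hk1 : 1 ≤ k := by
        rcases Nat.eq_zero_or_pos k with h0 | h0
        · subst h0; simp at hk; exact absurd hk huv
        · exact h0
      have hloop : (cyc S)^[m + k] u = u := by
        rw [Function.iterate_add_apply, hk, hm]
      exact h2 _ (setSplit_chain hmem (V₁ᶜ) hS hall hu (m + k) (by omega) u hu hloop)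
end

section
/- Given a directed graph D = (V, A), construct a signed graph H on vertex set {s} ∪ {c_e : e ∈ A} ∪ {a_v : v ∈ V} with positive edges s c_e for all e ∈ A and c_{(v,w)} a_v for all arcs (v,w) ∈ A, and negative edges s a_v for all v ∈ V and c_{(v,w)} a_w for all arcs (v,w) ∈ A. Then H admits a feasible line embedding if and only if V can be partitioned into V₁, V₂ such that both D[V₁] and D[V₂] are acyclic. -/
/-- Vertices of the signed graph built from a digraph `(V, A)`:
`Sum.inl ()` is the special vertex `s`, `Sum.inr (Sum.inl e)` is the checker
vertex `c_e` for an arc `e`, and `Sum.inr (Sum.inr v)` is the alignment vertex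
`a_v` for `v ∈ V`. -/
abbrev HVert (V : Type) (A : V → V → Prop) : Type :=
  Unit ⊕ ({p : V × V // A p.1 p.2} ⊕ V)

/-- One direction of the positive edges: `s c_e` for every arc `e`, and
`c_{(v,w)} a_v` for every arc `(v,w)`. -/
def HposAux {V : Type} {A : V → V → Prop} : HVert V A → HVert V A → Prop
  | Sum.inl _, Sum.inr (Sum.inl _) => True
  | Sum.inr (Sum.inl e), Sum.inr (Sum.inr v) => e.1.1 = v
  | _, _ => False

/-- One direction of the negative edges: `s a_v` for every `v`, and
`c_{(v,w)} a_w` for every arc `(v,w)`. -/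
def HnegAux {V : Type} {A : V → V → Prop} : HVert V A → HVert V A → Prop
  | Sum.inl _, Sum.inr (Sum.inr _) => True
  | Sum.inr (Sum.inl e), Sum.inr (Sum.inr v) => e.1.2 = v
  | _, _ => False

/-- The (symmetric) positive edge relation of the constructed signed graph. -/
def Hpos {V : Type} {A : V → V → Prop} (x y : HVert V A) : Prop :=
  HposAux x y ∨ HposAux y x

/-- The (symmetric) negative edge relation of the constructed signed graph. -/
def Hneg {V : Type} {A : V → V → Prop} (x y : HVert V A) : Prop :=
  HnegAux x y ∨ HnegAux y x

lemma exists_topo {V : Type} [Fintype V] (r : V → V → Prop)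
    (h : ∀ v, ¬ Relation.TransGen r v v) :
    ∃ f : V → ℕ, (∀ a b, r a b → f a < f b) ∧ (∀ v, f v ≤ Fintype.card V) := by
  classical
  refine ⟨fun v => (Finset.univ.filter (fun u => Relation.TransGen r u v)).card, ?_, ?_⟩
  · intro a b hab
    apply Finset.card_lt_card
    have hsub : (Finset.univ.filter (fun u => Relation.TransGen r u a)) ⊆
        (Finset.univ.filter (fun u => Relation.TransGen r u b)) := by
      intro x hx
      simp only [Finset.mem_filter, Finset.mem_univ, true_and] at hx ⊢
      exact hx.tail hab
    rw [Finset.ssubset_iff_of_subset hsub]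
    exact ⟨a, by simp [Relation.TransGen.single hab], by simpa using h a⟩
  · intro v
    exact le_trans (Finset.card_filter_le _ _) (le_of_eq (by simp))

lemma strat_lt {t t' i i' m : ℕ} (h : t < t') (hi : i < m) : t*m + i < t'*m + i' := by
  calc t*m + i < t*m + m := by omega
    _ = (t+1)*m := by ring
    _ ≤ t'*m := Nat.mul_le_mul_right _ h
    _ ≤ t'*m + i' := Nat.le_add_right _ _

lemma strat_bound {t i m K : ℕ} (h : t < K) (hi : i < m) : t*m + i < K*m := by
  calc t*m + i < t*m + m := by omega
    _ = (t+1)*m := by ring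
    _ ≤ K*m := Nat.mul_le_mul_right _ h

lemma strat_inj {t t' i i' m : ℕ} (hi : i < m) (hi' : i' < m)
    (h : t*m+i = t'*m+i') : t = t' ∧ i = i' := by
  rcases lt_trichotomy t t' with hlt | he | hlt
  · exact absurd h (ne_of_lt (strat_lt hlt hi))
  · subst he
    refine ⟨rfl, ?_⟩
    omega
  · exact absurd h.symm (ne_of_lt (strat_lt hlt hi'))

lemma exists_topo' {V : Type} [Fintype V] (r : V → V → Prop)
    (h : ∀ v, ¬ Relation.TransGen r v v) :
    ∃ f : V → ℕ, (∀ a b, r a b → f a < f b) ∧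
      (∀ v, f v < Fintype.card V * (Fintype.card V + 1)) ∧ Function.Injective f := by
  classical
  obtain ⟨g, hg, hgb⟩ := exists_topo r h
  set n := Fintype.card V with hn
  refine ⟨fun v => g v * n + (Fintype.equivFin V v : ℕ), ?_, ?_, ?_⟩
  · intro a b hab
    exact strat_lt (hg a b hab) (Fintype.equivFin V a).isLt
  · intro v
    have h1 : g v * n + (Fintype.equivFin V v : ℕ) < (n+1) * n :=
      strat_bound (Nat.lt_succ_of_le (hgb v)) (Fintype.equivFin V v).isLt
    calc g v * n + (Fintype.equivFin V v : ℕ) < (n+1)*n := h1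
      _ ≤ n * (n+1) := le_of_eq (Nat.mul_comm _ _)
  · intro a b hab
    obtain ⟨-, h2⟩ := strat_inj (Fintype.equivFin V a).isLt (Fintype.equivFin V b).isLt hab
    exact (Fintype.equivFin V).injective (Fin.ext h2)

section Inversion
variable {V : Type} {A : V → V → Prop}

lemma pos_s {x : HVert V A} {u : Unit} (h : Hpos x (Sum.inl u)) :
    ∃ e, x = Sum.inr (Sum.inl e) := by
  rcases x with x | e | v
  · rcases h with h | h <;> exact h.elim
  · exact ⟨e, rfl⟩
  · rcases h with h | h <;> exact h.elim

lemma neg_s {x : HVert V A} {u : Unit} (h : Hneg x (Sum.inl u)) :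
    ∃ v, x = Sum.inr (Sum.inr v) := by
  rcases x with x | e | v
  · rcases h with h | h <;> exact h.elim
  · rcases h with h | h <;> exact h.elim
  · exact ⟨v, rfl⟩

lemma pos_c {x : HVert V A} {e : {p : V × V // A p.1 p.2}}
    (h : Hpos x (Sum.inr (Sum.inl e))) :
    x = Sum.inl () ∨ x = Sum.inr (Sum.inr e.1.1) := by
  rcases x with x | f | v
  · exact Or.inl rfl
  · rcases h with h | h <;> exact h.elim
  · rcases h with h | h
    · exact h.elim
    · exact Or.inr (by rw [show v = e.1.1 from h.symm])

lemma neg_c {x : HVert V A} {e : {p : V × V // A p.1 p.2}}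
    (h : Hneg x (Sum.inr (Sum.inl e))) :
    x = Sum.inr (Sum.inr e.1.2) := by
  rcases x with x | f | v
  · rcases h with h | h <;> exact h.elim
  · rcases h with h | h <;> exact h.elim
  · rcases h with h | h
    · exact h.elim
    · rw [show v = e.1.2 from h.symm]

lemma pos_a {x : HVert V A} {v : V} (h : Hpos x (Sum.inr (Sum.inr v))) :
    ∃ e, x = Sum.inr (Sum.inl e) ∧ e.1.1 = v := by
  rcases x with x | f | w
  · rcases h with h | h <;> exact h.elim
  · rcases h with h | h
    · exact ⟨f, rfl, h⟩
    · exact h.elim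
  · rcases h with h | h <;> exact h.elim

lemma neg_a {x : HVert V A} {v : V} (h : Hneg x (Sum.inr (Sum.inr v))) :
    x = Sum.inl () ∨ ∃ e, x = Sum.inr (Sum.inl e) ∧ e.1.2 = v := by
  rcases x with x | f | w
  · exact Or.inl rfl
  · rcases h with h | h
    · exact Or.inr ⟨f, rfl, h⟩
    · exact h.elim
  · rcases h with h | h <;> exact h.elim

end Inversion

lemma bwd {V : Type} [Fintype V] (A : V → V → Prop) (V₁ : Set V)
    (hA1 : ∀ v, ¬ Relation.TransGen (fun a b => A a b ∧ a ∈ V₁ ∧ b ∈ V₁) v v)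
    (hA2 : ∀ v, ¬ Relation.TransGen (fun a b => A a b ∧ a ∉ V₁ ∧ b ∉ V₁) v v) :
    ∃ π : HVert V A → ℕ, Feasible Hpos Hneg π := by
  classical
  obtain ⟨t1, ht1m, ht1b, ht1i⟩ := exists_topo' _ hA1
  obtain ⟨t2, ht2m, ht2b, ht2i⟩ := exists_topo' _ hA2
  set n := Fintype.card V with hn
  haveI : Fintype {p : V × V // A p.1 p.2} := Fintype.ofFinite _
  set m := Fintype.card {p : V × V // A p.1 p.2} with hm
  set iA := Fintype.equivFin {p : V × V // A p.1 p.2} with hiA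
  set K := n * (n + 1) with hK
  set km := K * m with hkm
  set S := K + km with hS
  -- basic bounds
  have hKpos : ∀ v : V, 0 < K := by
    intro v
    have h0 : 0 < n := Fintype.card_pos_iff.2 ⟨v⟩
    exact Nat.mul_pos h0 (Nat.succ_pos n)
  have hmpos : ∀ e : {p : V × V // A p.1 p.2}, 0 < m := fun e => (iA e).pos
  have ht1K : ∀ v, t1 v < K := ht1b
  have ht2K : ∀ v, t2 v < K := ht2b
  set π : HVert V A → ℕ := Sum.elim (fun _ => S)
    (Sum.elim
      (fun e => if e.1.1 ∈ V₁ then S + 1 + t1 e.1.1 * m + (iA e : ℕ)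
        else K + (K - 1 - t2 e.1.1) * m + (iA e : ℕ))
      (fun v => if v ∈ V₁ then S + 1 + km + t1 v else K - 1 - t2 v)) with hπ
  have hps : ∀ u : Unit, π (Sum.inl u) = S := fun u => rfl
  have hpa1 : ∀ v ∈ V₁, π (Sum.inr (Sum.inr v)) = S + 1 + km + t1 v := by
    intro v hv; simp only [hπ, Sum.elim_inr, if_pos hv]
  have hpa2 : ∀ v ∉ V₁, π (Sum.inr (Sum.inr v)) = K - 1 - t2 v := by
    intro v hv; simp only [hπ, Sum.elim_inr, if_neg hv]
  have hpc1 : ∀ e : {p : V × V // A p.1 p.2}, e.1.1 ∈ V₁ →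
      π (Sum.inr (Sum.inl e)) = S + 1 + t1 e.1.1 * m + (iA e : ℕ) := by
    intro e he; simp only [hπ, Sum.elim_inr, Sum.elim_inl, if_pos he]
  have hpc2 : ∀ e : {p : V × V // A p.1 p.2}, e.1.1 ∉ V₁ →
      π (Sum.inr (Sum.inl e)) = K + (K - 1 - t2 e.1.1) * m + (iA e : ℕ) := by
    intro e he; simp only [hπ, Sum.elim_inr, Sum.elim_inl, if_neg he]
  -- range facts
  have R1 : ∀ v ∈ V₁, S + km < π (Sum.inr (Sum.inr v)) := by
    intro v hv; rw [hpa1 v hv]; omega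
  have R2 : ∀ v ∉ V₁, π (Sum.inr (Sum.inr v)) < K := by
    intro v hv; rw [hpa2 v hv]
    have := hKpos v; omega
  have R3 : ∀ e : {p : V × V // A p.1 p.2}, K ≤ π (Sum.inr (Sum.inl e)) := by
    intro e
    by_cases he : e.1.1 ∈ V₁
    · rw [hpc1 e he]; omega
    · rw [hpc2 e he]; omega
  have R4 : ∀ e : {p : V × V // A p.1 p.2}, π (Sum.inr (Sum.inl e)) ≤ S + km := by
    intro e
    by_cases he : e.1.1 ∈ V₁
    · rw [hpc1 e he]
      have h1 : t1 e.1.1 * m + (iA e : ℕ) < K * m := strat_bound (ht1K _) (iA e).isLt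
      rw [← hkm] at h1
      omega
    · rw [hpc2 e he]
      have h1 : (K - 1 - t2 e.1.1) * m + (iA e : ℕ) < K * m :=
        strat_bound (by have := hKpos e.1.1; omega) (iA e).isLt
      rw [← hkm] at h1
      omega
  have R5 : ∀ e : {p : V × V // A p.1 p.2}, e.1.1 ∉ V₁ →
      π (Sum.inr (Sum.inl e)) < S := by
    intro e he; rw [hpc2 e he]
    have h1 : (K - 1 - t2 e.1.1) * m + (iA e : ℕ) < K * m :=
      strat_bound (by have := hKpos e.1.1; omega) (iA e).isLt
    rw [← hkm] at h1
    omega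
  have R6 : ∀ e : {p : V × V // A p.1 p.2}, e.1.1 ∈ V₁ →
      S < π (Sum.inr (Sum.inl e)) := by
    intro e he; rw [hpc1 e he]; omega
  -- ordering facts
  have O1 : ∀ v w, A v w → v ∈ V₁ → w ∈ V₁ →
      π (Sum.inr (Sum.inr v)) < π (Sum.inr (Sum.inr w)) := by
    intro v w hA hv hw
    rw [hpa1 v hv, hpa1 w hw]
    have := ht1m v w ⟨hA, hv, hw⟩
    omega
  have O2 : ∀ v w, A v w → v ∉ V₁ → w ∉ V₁ →
      π (Sum.inr (Sum.inr w)) < π (Sum.inr (Sum.inr v)) := by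
    intro v w hA hv hw
    rw [hpa2 v hv, hpa2 w hw]
    have := ht2m v w ⟨hA, hv, hw⟩
    have := ht2K v
    have := ht2K w
    have := hKpos v
    omega
  have O3 : ∀ e f : {p : V × V // A p.1 p.2}, e.1.1 ∈ V₁ → f.1.1 ∈ V₁ →
      t1 e.1.1 < t1 f.1.1 →
      π (Sum.inr (Sum.inl e)) < π (Sum.inr (Sum.inl f)) := by
    intro e f he hf hlt
    rw [hpc1 e he, hpc1 f hf]
    have h1 : t1 e.1.1 * m + (iA e : ℕ) < t1 f.1.1 * m + (iA f : ℕ) :=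
      strat_lt hlt (iA e).isLt
    omega
  have O4 : ∀ e f : {p : V × V // A p.1 p.2}, e.1.1 ∉ V₁ → f.1.1 ∉ V₁ →
      t2 f.1.1 < t2 e.1.1 →
      π (Sum.inr (Sum.inl e)) < π (Sum.inr (Sum.inl f)) := by
    intro e f he hf hlt
    rw [hpc2 e he, hpc2 f hf]
    have h5 : K - 1 - t2 e.1.1 < K - 1 - t2 f.1.1 := by
      have := ht2K e.1.1
      have := ht2K f.1.1
      have := hKpos e.1.1
      omega
    have h1 : (K - 1 - t2 e.1.1) * m + (iA e : ℕ) <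
        (K - 1 - t2 f.1.1) * m + (iA f : ℕ) := strat_lt h5 (iA e).isLt
    omega
  refine ⟨π, ?_, ?_, ?_⟩
  · -- injectivity
    have IC : ∀ e f : {p : V × V // A p.1 p.2},
        π (Sum.inr (Sum.inl e)) = π (Sum.inr (Sum.inl f)) → e = f := by
      intro e f h
      by_cases he : e.1.1 ∈ V₁ <;> by_cases hf : f.1.1 ∈ V₁
      · rw [hpc1 e he, hpc1 f hf] at h
        have h2 : t1 e.1.1 * m + (iA e : ℕ) = t1 f.1.1 * m + (iA f : ℕ) := by omega
        obtain ⟨-, h3⟩ := strat_inj (iA e).isLt (iA f).isLt h2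
        exact iA.injective (Fin.ext h3)
      · have := R6 e he; have := R5 f hf; omega
      · have := R5 e he; have := R6 f hf; omega
      · rw [hpc2 e he, hpc2 f hf] at h
        have h2 : (K - 1 - t2 e.1.1) * m + (iA e : ℕ) =
            (K - 1 - t2 f.1.1) * m + (iA f : ℕ) := by omega
        obtain ⟨-, h3⟩ := strat_inj (iA e).isLt (iA f).isLt h2
        exact iA.injective (Fin.ext h3)
    have IV : ∀ v w : V, π (Sum.inr (Sum.inr v)) = π (Sum.inr (Sum.inr w)) → v = w := by
      intro v w h
      by_cases hv : v ∈ V₁ <;> by_cases hw : w ∈ V₁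
      · rw [hpa1 v hv, hpa1 w hw] at h
        exact ht1i (by omega)
      · have := R1 v hv; have := R2 w hw; omega
      · have := R2 v hv; have := R1 w hw; omega
      · rw [hpa2 v hv, hpa2 w hw] at h
        have := ht2K v; have := ht2K w; have := hKpos v
        exact ht2i (by omega)
    have CNS : ∀ e : {p : V × V // A p.1 p.2}, π (Sum.inr (Sum.inl e)) ≠ S := by
      intro e
      by_cases he : e.1.1 ∈ V₁
      · have := R6 e he; omega
      · have := R5 e he; omega
    have ANC : ∀ (v : V) (e : {p : V × V // A p.1 p.2}),
        π (Sum.inr (Sum.inr v)) ≠ π (Sum.inr (Sum.inl e)) := by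
      intro v e
      by_cases hv : v ∈ V₁
      · have := R1 v hv; have := R4 e; omega
      · have := R2 v hv; have := R3 e; omega
    have ANS : ∀ v : V, π (Sum.inr (Sum.inr v)) ≠ S := by
      intro v
      by_cases hv : v ∈ V₁
      · have := R1 v hv; omega
      · have := R2 v hv; have := hKpos v; omega
    intro x y h
    rcases x with x | e | v <;> rcases y with y | f | w
    · cases x; cases y; rfl
    · exact absurd (h.symm.trans (hps x)) (CNS f)
    · exact absurd (h.symm.trans (hps x)) (ANS w)
    · exact absurd (h.trans (hps y)) (CNS e)
    · exact congrArg _ (congrArg _ (IC e f h))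
    · exact absurd h.symm (ANC w e)
    · exact absurd (h.trans (hps y)) (ANS v)
    · exact absurd h (ANC v f)
    · exact congrArg _ (congrArg _ (IV v w h))
  · -- condition 1
    intro u u₁ u₂ l1 l2 hEp hEn
    exfalso
    rcases u with u | e | v
    · obtain ⟨e₁, rfl⟩ := pos_s hEp
      obtain ⟨v₂, rfl⟩ := neg_s hEn
      rw [hps u] at l2
      by_cases hv : v₂ ∈ V₁
      · have := R1 v₂ hv; omega
      · have := R2 v₂ hv; have := R3 e₁; omega
    · have rflu₂ := neg_c hEn
      subst rflu₂
      rcases pos_c hEp with rfl | rfl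
      · -- u₁ = s : S < π a_y < π c
        rw [hps ()] at l1
        by_cases hy : e.1.2 ∈ V₁
        · have := R1 e.1.2 hy; have := R4 e; omega
        · have := R2 e.1.2 hy; omega
      · -- u₁ = a_x : π a_x < π a_y < π c
        by_cases hx : e.1.1 ∈ V₁
        · have := R1 e.1.1 hx; have := R4 e; omega
        · have h5 := R5 e hx
          by_cases hy : e.1.2 ∈ V₁
          · have := R1 e.1.2 hy; omega
          · have := O2 e.1.1 e.1.2 e.2 hx hy; omega
    · obtain ⟨e₁, rfl, he₁⟩ := pos_a hEp
      rcases neg_a hEn with rfl | ⟨e₂, rfl, he₂⟩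
      · -- u₂ = s : π c₁ < S < π a_v
        rw [hps ()] at l1 l2
        by_cases hv : v ∈ V₁
        · have h6 := R6 e₁ (he₁ ▸ hv); omega
        · have := R2 v hv; have := hKpos v; omega
      · -- u₂ = c₂ : π c₁ < π c₂ < π a_v
        by_cases hv : v ∈ V₁
        · have hx1 : e₁.1.1 ∈ V₁ := he₁ ▸ hv
          by_cases hz : e₂.1.1 ∈ V₁
          · have hmono := ht1m e₂.1.1 v ⟨he₂ ▸ e₂.2, hz, hv⟩
            have := O3 e₂ e₁ hz hx1 (by rw [he₁]; exact hmono)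
            omega
          · have := R5 e₂ hz; have := R6 e₁ hx1; omega
        · have := R2 v hv; have := R3 e₂; omega
  · -- condition 2
    intro u u₁ u₂ l1 l2 hEp hEn
    exfalso
    rcases u with u | e | v
    · obtain ⟨e₁, rfl⟩ := pos_s hEp
      obtain ⟨v₂, rfl⟩ := neg_s hEn
      rw [hps u] at l1
      by_cases hv : v₂ ∈ V₁
      · have := R1 v₂ hv; have := R4 e₁; omega
      · have := R2 v₂ hv; have := hKpos v₂; omega
    · have rflu₂ := neg_c hEn
      subst rflu₂
      rcases pos_c hEp with rfl | rfl
      · rw [hps ()] at l2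
        by_cases hy : e.1.2 ∈ V₁
        · have := R1 e.1.2 hy; have := hKpos e.1.2; omega
        · have := R2 e.1.2 hy; have := R3 e; omega
      · by_cases hx : e.1.1 ∈ V₁
        · have h6 := R6 e hx
          by_cases hy : e.1.2 ∈ V₁
          · have := O1 e.1.1 e.1.2 e.2 hx hy; omega
          · have := R2 e.1.2 hy; have := R3 e; omega
        · have := R2 e.1.1 hx; have := R3 e; omega
    · obtain ⟨e₁, rfl, he₁⟩ := pos_a hEp
      rcases neg_a hEn with rfl | ⟨e₂, rfl, he₂⟩
      · rw [hps ()] at l1 l2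
        by_cases hv : v ∈ V₁
        · have := R1 v hv; omega
        · have h5 := R5 e₁ (by rw [he₁]; exact hv)
          omega
      · by_cases hv : v ∈ V₁
        · have := R1 v hv; have := R4 e₁; have := R4 e₂; omega
        · have hx1 : e₁.1.1 ∉ V₁ := by rw [he₁]; exact hv
          by_cases hz : e₂.1.1 ∈ V₁
          · have := R6 e₂ hz; have := R5 e₁ hx1; omega
          · have hmono := ht2m e₂.1.1 v ⟨he₂ ▸ e₂.2, hz, hv⟩
            have := O4 e₁ e₂ hx1 hz (by rw [he₁]; exact hmono)
            omega


lemma fwd {V : Type} (A : V → V → Prop) (hirr : ∀ v, ¬ A v v)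
    (π : HVert V A → ℕ) (hf : Feasible Hpos Hneg π) :
    ∃ V₁ : Set V,
      (∀ v, ¬ Relation.TransGen (fun a b => A a b ∧ a ∈ V₁ ∧ b ∈ V₁) v v) ∧
      (∀ v, ¬ Relation.TransGen (fun a b => A a b ∧ a ∉ V₁ ∧ b ∉ V₁) v v) := by
  obtain ⟨hinj, h1, h2⟩ := hf
  set s : HVert V A := Sum.inl () with hs
  have av : V → HVert V A := fun v => Sum.inr (Sum.inr v)
  have key1 : ∀ v w (hA : A v w), π s < π (Sum.inr (Sum.inr v)) →
      π s < π (Sum.inr (Sum.inr w)) →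
      π (Sum.inr (Sum.inr v)) < π (Sum.inr (Sum.inr w)) := by
    intro v w hA hv hw
    set c : HVert V A := Sum.inr (Sum.inl ⟨(v,w), hA⟩) with hc
    have hvw : v ≠ w := fun h => hirr w (h ▸ hA)
    have hclt : π c < π (Sum.inr (Sum.inr w)) := by
      rcases lt_trichotomy (π c) (π (Sum.inr (Sum.inr w))) with h | h | h
      · exact h
      · exact absurd (hinj h) (by simp [hc])
      · exact absurd (Or.inr (show HnegAux s (Sum.inr (Sum.inr w)) from trivial))
          (h2 s c (Sum.inr (Sum.inr w)) hw h (Or.inr (show HposAux s c from trivial)))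
    rcases lt_trichotomy (π (Sum.inr (Sum.inr v))) (π (Sum.inr (Sum.inr w))) with h | h | h
    · exact h
    · exact absurd (hinj h) (by simp [hvw])
    · exact absurd (Or.inr (show HnegAux c (Sum.inr (Sum.inr w)) from rfl))
        (h2 c (Sum.inr (Sum.inr v)) (Sum.inr (Sum.inr w)) hclt h
          (Or.inr (show HposAux c (Sum.inr (Sum.inr v)) from rfl)))
  have key2 : ∀ v w (hA : A v w), π (Sum.inr (Sum.inr v)) < π s →
      π (Sum.inr (Sum.inr w)) < π s →
      π (Sum.inr (Sum.inr w)) < π (Sum.inr (Sum.inr v)) := by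
    intro v w hA hv hw
    set c : HVert V A := Sum.inr (Sum.inl ⟨(v,w), hA⟩) with hc
    have hvw : v ≠ w := fun h => hirr w (h ▸ hA)
    have hclt : π (Sum.inr (Sum.inr w)) < π c := by
      rcases lt_trichotomy (π (Sum.inr (Sum.inr w))) (π c) with h | h | h
      · exact h
      · exact absurd (hinj h) (by simp [hc])
      · exact absurd (Or.inr (show HnegAux s (Sum.inr (Sum.inr w)) from trivial))
          (h1 s c (Sum.inr (Sum.inr w)) h hw (Or.inr (show HposAux s c from trivial)))
    rcases lt_trichotomy (π (Sum.inr (Sum.inr w))) (π (Sum.inr (Sum.inr v))) with h | h | h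
    · exact h
    · exact absurd (hinj h) (by simp [Ne.symm hvw])
    · exact absurd (Or.inr (show HnegAux c (Sum.inr (Sum.inr w)) from rfl))
        (h1 c (Sum.inr (Sum.inr v)) (Sum.inr (Sum.inr w)) h hclt
          (Or.inr (show HposAux c (Sum.inr (Sum.inr v)) from rfl)))
  refine ⟨{v | π s < π (Sum.inr (Sum.inr v))}, ?_, ?_⟩
  · intro v hTG
    have mono : ∀ a b, Relation.TransGen
        (fun a b => A a b ∧ a ∈ {v | π s < π (Sum.inr (Sum.inr v))} ∧
          b ∈ {v | π s < π (Sum.inr (Sum.inr v))}) a b →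
        π (Sum.inr (Sum.inr a)) < π (Sum.inr (Sum.inr b)) := by
      intro a b h
      induction h with
      | single h => exact key1 _ _ h.1 h.2.1 h.2.2
      | tail _ h ih => exact lt_trans ih (key1 _ _ h.1 h.2.1 h.2.2)
    exact lt_irrefl _ (mono v v hTG)
  · intro v hTG
    have hlt : ∀ a : V, a ∉ {v | π s < π (Sum.inr (Sum.inr v))} →
        π (Sum.inr (Sum.inr a)) < π s := by
      intro a ha
      rcases lt_trichotomy (π (Sum.inr (Sum.inr a))) (π s) with h | h | h
      · exact h
      · exact absurd (hinj h) (by simp [hs])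
      · exact absurd h ha
    have mono : ∀ a b, Relation.TransGen
        (fun a b => A a b ∧ a ∉ {v | π s < π (Sum.inr (Sum.inr v))} ∧
          b ∉ {v | π s < π (Sum.inr (Sum.inr v))}) a b →
        π (Sum.inr (Sum.inr b)) < π (Sum.inr (Sum.inr a)) := by
      intro a b h
      induction h with
      | single h => exact key2 _ _ h.1 (hlt _ h.2.1) (hlt _ h.2.2)
      | tail _ h ih => exact lt_trans (key2 _ _ h.1 (hlt _ h.2.1) (hlt _ h.2.2)) ih
    exact lt_irrefl _ (mono v v hTG)


/-- The signed graph built from a loopless digraph `(V, A)` admits a feasible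
line embedding iff `V` can be partitioned into two parts, each inducing an
acyclic subdigraph. -/
theorem lineClusterEmbedding_iff_acyclicPartition
    {V : Type} [Fintype V] (A : V → V → Prop) (hirr : ∀ v, ¬ A v v) :
    (∃ π : HVert V A → ℕ, Feasible Hpos Hneg π) ↔
    (∃ V₁ : Set V,
      (∀ v, ¬ Relation.TransGen (fun a b => A a b ∧ a ∈ V₁ ∧ b ∈ V₁) v v) ∧
      (∀ v, ¬ Relation.TransGen (fun a b => A a b ∧ a ∉ V₁ ∧ b ∉ V₁) v v)) := by
  constructor
  · rintro ⟨π, h⟩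
    exact fwd A hirr π h
  · rintro ⟨V₁, h1, h2⟩
    exact bwd A V₁ h1 h2
end

section
/- Let G = (V, E⁺, E⁻) be a signed graph and π a feasible line embedding of G. Suppose there is a vertex s whose set of positive neighbours is P and whose set of negative neighbours is N, with P ∪ N ∪ {s} = V. Then the set P ∪ {s} forms an interval with respect to π: for any x, y ∈ P ∪ {s} and any z ∈ V with x <_π z <_π y, we have z ∈ P ∪ {s}. -/
/-- If a vertex `s` of a signed graph is adjacent to every other vertex
(positively or negatively), then in any feasible line embedding the set
consisting of `s` and its positive neighbours forms an interval of the
ordering. -/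
theorem special_vertex_positive_interval
    {V : Type} [Fintype V] (Ep En : V → V → Prop)
    (hsymp : ∀ u v, Ep u v → Ep v u) (hsymn : ∀ u v, En u v → En v u)
    (hirrp : ∀ v, ¬ Ep v v) (hirrn : ∀ v, ¬ En v v)
    (hdisj : ∀ u v, ¬ (Ep u v ∧ En u v))
    (π : V → ℕ) (hfeas : Feasible Ep En π)
    (s : V) (hall : ∀ v : V, v ≠ s → Ep s v ∨ En s v) :
    ∀ x y z : V, (Ep s x ∨ x = s) → (Ep s y ∨ y = s) →
      π x < π z → π z < π y → (Ep s z ∨ z = s) := by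
  intro x y z hx hy hxz hzy
  by_contra h
  push_neg at h
  obtain ⟨hz1, hz2⟩ := h
  have hzs : En s z := (hall z hz2).resolve_left hz1
  have hzs' : En z s := hsymn _ _ hzs
  obtain ⟨hinj, hf1, hf2⟩ := hfeas
  rcases lt_or_gt_of_ne (fun he => hz2 (hinj he)) with hlt | hgt
  · -- π z < π s
    rcases hx with hx | rfl
    · exact hf1 s x z hxz hlt (hsymp _ _ hx) hzs'
    · exact absurd (hxz.trans hlt) (lt_irrefl _)
  · -- π s < π z
    rcases hy with hy | rfl
    · exact hf2 s y z hgt hzy (hsymp _ _ hy) hzs'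
    · exact absurd (hgt.trans hzy) (lt_irrefl _)
end

section
/- For a signed graph (V, E⁺, E⁻), a vertex v ∉ X is called good for X ⊆ V if: (a) no vertex w ∈ X with vw ∈ E⁻ has a positive edge to some vertex in V \ (X ∪ {v}), and (b) no vertex w ∈ V \ (X ∪ {v}) with vw ∈ E⁻ has a positive edge to some vertex in X. Then an ordering π of V is a feasible line embedding if and only if every vertex v ∈ V is good for the set {u : u <_π v}. -/
/-- `v ∉ X` is good for `X`: no negative neighbour of `v` inside `X` has a
positive neighbour outside `X ∪ {v}`, and no negative neighbour of `v` outside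
`X ∪ {v}` has a positive neighbour inside `X`. -/
def Good {V : Type} (Ep En : V → V → Prop) (X : Set V) (v : V) : Prop :=
  v ∉ X ∧
  (∀ w ∈ X, En v w → ∀ z : V, z ∉ X → z ≠ v → ¬ Ep w z) ∧
  (∀ w : V, w ∉ X → w ≠ v → En v w → ∀ z ∈ X, ¬ Ep w z)

/-- An ordering π of the vertices of a signed graph is a feasible line
embedding iff every vertex `v` is good for the set of vertices preceding it. -/
theorem feasible_iff_all_good
    {V : Type} [Fintype V] (Ep En : V → V → Prop)
    (hsymp : ∀ u v, Ep u v → Ep v u) (hsymn : ∀ u v, En u v → En v u)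
    (hirrp : ∀ v, ¬ Ep v v) (hirrn : ∀ v, ¬ En v v)
    (hdisj : ∀ u v, ¬ (Ep u v ∧ En u v))
    (π : V → ℕ) (hinj : Function.Injective π) :
    ((∀ u u₁ u₂ : V, π u₁ < π u₂ → π u₂ < π u → Ep u₁ u → ¬ En u₂ u) ∧
     (∀ u u₁ u₂ : V, π u < π u₂ → π u₂ < π u₁ → Ep u₁ u → ¬ En u₂ u)) ↔
    (∀ v : V, Good Ep En {u : V | π u < π v} v) := by
  constructor
  · rintro ⟨h1, h2⟩ v
    refine ⟨by simp, ?_, ?_⟩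
    · intro w hw hn z hz hzv hp
      have hvz : π v < π z := lt_of_le_of_ne (not_lt.mp hz) (fun h => hzv (hinj h.symm))
      exact h2 w z v hw hvz (hsymp w z hp) hn
    · intro w hw hwv hn z hz hp
      have hvw : π v < π w := lt_of_le_of_ne (not_lt.mp hw) (fun h => hwv (hinj h.symm))
      exact h1 w z v hz hvw (hsymp w z hp) hn
  · intro hg
    constructor
    · intro u u₁ u₂ h12 h2u hp hn
      exact (hg u₂).2.2 u (by simpa using not_lt.mpr h2u.le)
        (fun h => lt_irrefl _ (h ▸ h2u)) hn u₁ h12 (hsymp u₁ u hp)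
    · intro u u₁ u₂ hu2 h21 hp hn
      exact (hg u₂).2.1 u hu2 hn u₁ (by simpa using not_lt.mpr h21.le)
        (fun h => lt_irrefl _ (h ▸ h21)) (hsymp u₁ u hp)
end

section
/- Given a 3-CNF formula φ, construct the set system (U, 𝓕) where U consists of a special element s together with the two literals x, ¬x for every variable x of φ, and 𝓕 contains, for every variable x, the set {x, ¬x}, and for every clause C, the set consisting of s and the literals of C. Then φ is satisfiable if and only if there exists X ⊆ U such that every set in 𝓕 contains both an element of X and an element of U \ X. -/
/-- A 3-CNF formula (clauses over variables `ι`, each clause a set of at most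
three literals, a literal being a variable paired with a polarity) is
satisfiable iff the constructed Set Splitting instance has a solution.  The
universe is `Option (ι × Bool)`, with `none` the special element `s` and
`some (x, b)` the literal `x`/`¬x`; the family consists of `{x, ¬x}` for each
variable `x` and `{s} ∪ C` for each clause `C`. -/
theorem threeSat_iff_setSplitting
    {ι : Type} [DecidableEq ι] (clauses : Set (Finset (ι × Bool)))
    (h3 : ∀ C ∈ clauses, C.card ≤ 3) :
    (∃ σ : ι → Bool, ∀ C ∈ clauses, ∃ lit ∈ C, σ lit.1 = lit.2) ↔
    (∃ X : Set (Option (ι × Bool)),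
      (∀ x : ι,
        ((some (x, true) ∈ X ∨ some (x, false) ∈ X) ∧
         (some (x, true) ∉ X ∨ some (x, false) ∉ X))) ∧
      (∀ C ∈ clauses,
        ((none ∈ X ∨ ∃ lit ∈ C, some lit ∈ X) ∧
         (none ∉ X ∨ ∃ lit ∈ C, some lit ∉ X)))) := by
  classical
  constructor
  · rintro ⟨σ, hσ⟩
    refine ⟨Set.range (fun x => some (x, σ x)), fun x => ⟨?_, ?_⟩, fun C hC => ⟨?_, ?_⟩⟩
    · cases hx : σ x
      · exact Or.inr ⟨x, by simp [hx]⟩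
      · exact Or.inl ⟨x, by simp [hx]⟩
    · cases hx : σ x
      · exact Or.inl (by simp [hx])
      · exact Or.inr (by simp [hx])
    · obtain ⟨lit, hlit, hval⟩ := hσ C hC
      exact Or.inr ⟨lit, hlit, ⟨lit.1, by simp [hval]⟩⟩
    · exact Or.inl (by simp)
  · rintro ⟨X, hvar, hcl⟩
    by_cases h0 : (none : Option (ι × Bool)) ∈ X
    · refine ⟨fun x => ! decide (some (x, true) ∈ X), fun C hC => ?_⟩
      obtain ⟨lit, hlit, hnot⟩ := ((hcl C hC).2).resolve_left (by simpa using h0)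
      refine ⟨lit, hlit, ?_⟩
      obtain ⟨x, b⟩ := lit
      cases b
      · have : some (x, true) ∈ X := ((hvar x).1).resolve_right hnot
        simp [this]
      · simp [hnot]
    · refine ⟨fun x => decide (some (x, true) ∈ X), fun C hC => ?_⟩
      obtain ⟨lit, hlit, hmem⟩ := ((hcl C hC).1).resolve_left h0
      refine ⟨lit, hlit, ?_⟩
      obtain ⟨x, b⟩ := lit
      cases b
      · have : some (x, true) ∉ X := ((hvar x).2).resolve_right (by simpa using hmem)
        simp [this]
      · simp [hmem]
end

section
/- Let D = (V, A) be a directed graph and suppose (V₁, V₂) is a partition of V such that D[V₁] and D[V₂] are both acyclic. Construct the signed graph H with vertices {s} ∪ {c_e : e ∈ A} ∪ {a_v : v ∈ V}, positive edges {s c_e : e ∈ A} ∪ {c_{(v,w)} a_v : (v,w) ∈ A}, and negative edges {s a_v : v ∈ V} ∪ {c_{(v,w)} a_w : (v,w) ∈ A}. Fix topological orderings π₁ of D[V₁] and π₂ of D[V₂], and define the ordering π of the vertices of H by placing, in order: the vertices a_v for v ∈ V₁ in reverse π₁-order; the checkers c_{(v,w)} with v ∈ V₁, w ∈ V₂ in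 any order; the checkers c_{(v,w)} with v, w ∈ V₁ in reverse lexicographic order of (π₁(v), π₁(w)); the vertex s; the checkers c_{(v,w)} with v, w ∈ V₂ in lexicographic order of (π₂(v), π₂(w)); the checkers c_{(v,w)} with v ∈ V₂, w ∈ V₁ in any order; and finally the vertices a_v for v ∈ V₂ in π₂-order. Then π is a feasible line embedding of H. -/
/-- The index of the block of the constructed ordering in which each vertex of
the signed graph is placed: alignment vertices of `V₁`, then checkers from `V₁`
to `V₂`, then checkers inside `V₁`, then `s`, then checkers inside `V₂`, then
checkers from `V₂` to `V₁`, then alignment vertices of `V₂`. -/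
def blockIdx {V : Type} {A : V → V → Prop} (V₁ : Set V)
    [DecidablePred (· ∈ V₁)] : HVert V A → ℕ
  | Sum.inl _ => 3
  | Sum.inr (Sum.inl e) =>
      if e.1.1 ∈ V₁ then (if e.1.2 ∈ V₁ then 2 else 1)
      else (if e.1.2 ∈ V₁ then 5 else 4)
  | Sum.inr (Sum.inr v) => if v ∈ V₁ then 0 else 6

/-- If `(V₁, V₂)` is a partition of a loopless digraph `(V, A)` into two
acyclic parts with topological orderings `π₁, π₂`, then the ordering `π` of the
vertices of the associated signed graph described by the block structure
`blockIdx` — with the alignment vertices of `V₁` in reverse `π₁`-order, the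
checkers inside `V₁` in reverse lexicographic `π₁`-order, the checkers inside
`V₂` in lexicographic `π₂`-order, the alignment vertices of `V₂` in `π₂`-order,
and the mixed checkers in any order — is a feasible line embedding. -/
theorem constructed_ordering_feasible
    {V : Type} [Fintype V] (A : V → V → Prop) (hirr : ∀ v, ¬ A v v)
    (V₁ : Set V) [DecidablePred (· ∈ V₁)]
    (π₁ π₂ : V → ℕ)
    (hπ₁inj : ∀ v ∈ V₁, ∀ w ∈ V₁, π₁ v = π₁ w → v = w)
    (hπ₂inj : ∀ v ∉ V₁, ∀ w ∉ V₁, π₂ v = π₂ w → v = w)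
    (htopo₁ : ∀ v w : V, A v w → v ∈ V₁ → w ∈ V₁ → π₁ v < π₁ w)
    (htopo₂ : ∀ v w : V, A v w → v ∉ V₁ → w ∉ V₁ → π₂ v < π₂ w)
    (π : HVert V A → ℕ)
    (hinj : Function.Injective π)
    (hblocks : ∀ x y : HVert V A,
      blockIdx V₁ x < blockIdx V₁ y → π x < π y)
    (halign₁ : ∀ v w : V, v ∈ V₁ → w ∈ V₁ → π₁ v < π₁ w →
      π (Sum.inr (Sum.inr w)) < π (Sum.inr (Sum.inr v)))
    (hcheck₁ : ∀ e e' : {p : V × V // A p.1 p.2},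
      e.1.1 ∈ V₁ → e.1.2 ∈ V₁ → e'.1.1 ∈ V₁ → e'.1.2 ∈ V₁ →
      (π₁ e.1.1 < π₁ e'.1.1 ∨ (e.1.1 = e'.1.1 ∧ π₁ e.1.2 < π₁ e'.1.2)) →
      π (Sum.inr (Sum.inl e')) < π (Sum.inr (Sum.inl e)))
    (hcheck₂ : ∀ e e' : {p : V × V // A p.1 p.2},
      e.1.1 ∉ V₁ → e.1.2 ∉ V₁ → e'.1.1 ∉ V₁ → e'.1.2 ∉ V₁ →
      (π₂ e.1.1 < π₂ e'.1.1 ∨ (e.1.1 = e'.1.1 ∧ π₂ e.1.2 < π₂ e'.1.2)) →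
      π (Sum.inr (Sum.inl e)) < π (Sum.inr (Sum.inl e')))
    (halign₂ : ∀ v w : V, v ∉ V₁ → w ∉ V₁ → π₂ v < π₂ w →
      π (Sum.inr (Sum.inr v)) < π (Sum.inr (Sum.inr w))) :
    Feasible Hpos Hneg π := by
  classical
  have hble : ∀ x y : HVert V A, π x < π y → blockIdx V₁ x ≤ blockIdx V₁ y := by
    intro x y h
    by_contra hb
    exact absurd (hblocks y x (lt_of_not_ge hb)) (not_lt.2 h.le)
  refine ⟨hinj, ?_, ?_⟩
  · intro u u₁ u₂ h1 h2 hp hn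
    obtain _ | e | v := u <;> obtain _ | e₁ | v₁ := u₁ <;> obtain _ | e₂ | v₂ := u₂ <;>
      simp only [Hpos, Hneg, HposAux, HnegAux, or_false, false_or, or_self] at hp hn
    -- u = s, u₁ = c_{e₁}, u₂ = a_{v₂}
    · have hb1 := hble _ _ h1
      have hb2 := hble _ _ h2
      simp only [blockIdx] at hb1 hb2
      split_ifs at hb1 hb2 <;> omega
    -- u = c_e, u₁ = s, u₂ = a_{v₂}
    · subst hn
      have hb1 := hble _ _ h1
      have hb2 := hble _ _ h2
      simp only [blockIdx] at hb1 hb2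
      split_ifs at hb1 hb2 <;> omega
    -- u = c_e, u₁ = a_{v₁}, u₂ = a_{v₂}
    · subst hp; subst hn
      by_cases h1V : e.1.1 ∈ V₁ <;> by_cases h2V : e.1.2 ∈ V₁
      · exact absurd h1 (not_lt.2 (halign₁ _ _ h1V h2V (htopo₁ _ _ e.2 h1V h2V)).le)
      · have hb2 := hble _ _ h2
        simp [blockIdx, h1V, h2V] at hb2
      · have hb1 := hble _ _ h1
        simp [blockIdx, h1V, h2V] at hb1
      · have hb2 := hble _ _ h2
        simp [blockIdx, h1V, h2V] at hb2
    -- u = a_v, u₁ = c_{e₁}, u₂ = s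
    · subst hp
      have hb1 := hble _ _ h1
      have hb2 := hble _ _ h2
      simp only [blockIdx] at hb1 hb2
      split_ifs at hb1 hb2 <;> omega
    -- u = a_v, u₁ = c_{e₁}, u₂ = c_{e₂}
    · by_cases hv : v ∈ V₁
      · have hb2 := hble _ _ h2
        simp only [blockIdx, hv, if_true] at hb2
        split_ifs at hb2 <;> omega
      · have h11 : e₁.1.1 ∉ V₁ := by rw [hp]; exact hv
        have h22 : e₂.1.2 ∉ V₁ := by rw [hn]; exact hv
        have hb1 := hble _ _ h1
        by_cases ha : e₂.1.1 ∈ V₁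
        · simp [blockIdx, h11, h22, ha] at hb1
          split_ifs at hb1 <;> omega
        · by_cases hb : e₁.1.2 ∈ V₁
          · simp [blockIdx, h11, h22, ha, hb] at hb1
          · refine absurd h1 (not_lt.2 (hcheck₂ e₂ e₁ ha h22 h11 hb (Or.inl ?_)).le)
            rw [hp]
            have := htopo₂ _ _ e₂.2 ha h22
            rwa [hn] at this
  · intro u u₁ u₂ h1 h2 hp hn
    obtain _ | e | v := u <;> obtain _ | e₁ | v₁ := u₁ <;> obtain _ | e₂ | v₂ := u₂ <;>
      simp only [Hpos, Hneg, HposAux, HnegAux, or_false, false_or, or_self] at hp hn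
    -- u = s, u₁ = c_{e₁}, u₂ = a_{v₂}
    · have hb1 := hble _ _ h1
      have hb2 := hble _ _ h2
      simp only [blockIdx] at hb1 hb2
      split_ifs at hb1 hb2 <;> omega
    -- u = c_e, u₁ = s, u₂ = a_{v₂}
    · subst hn
      have hb1 := hble _ _ h1
      have hb2 := hble _ _ h2
      simp only [blockIdx] at hb1 hb2
      split_ifs at hb1 hb2 <;> omega
    -- u = c_e, u₁ = a_{v₁}, u₂ = a_{v₂}
    · subst hp; subst hn
      by_cases h1V : e.1.1 ∈ V₁ <;> by_cases h2V : e.1.2 ∈ V₁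
      · have hb1 := hble _ _ h1
        simp [blockIdx, h1V, h2V] at hb1
      · have hb2 := hble _ _ h2
        simp [blockIdx, h1V, h2V] at hb2
      · have hb1 := hble _ _ h1
        simp [blockIdx, h1V, h2V] at hb1
      · exact absurd h2 (not_lt.2 (halign₂ _ _ h1V h2V (htopo₂ _ _ e.2 h1V h2V)).le)
    -- u = a_v, u₁ = c_{e₁}, u₂ = s
    · subst hp
      have hb1 := hble _ _ h1
      have hb2 := hble _ _ h2
      simp only [blockIdx] at hb1 hb2
      split_ifs at hb1 hb2 <;> omega
    -- u = a_v, u₁ = c_{e₁}, u₂ = c_{e₂}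
    · by_cases hv : v ∈ V₁
      · have h11 : e₁.1.1 ∈ V₁ := by rw [hp]; exact hv
        have h22 : e₂.1.2 ∈ V₁ := by rw [hn]; exact hv
        have hb2 := hble _ _ h2
        by_cases ha : e₂.1.1 ∈ V₁
        · by_cases hb : e₁.1.2 ∈ V₁
          · refine absurd h2 (not_lt.2 (hcheck₁ e₂ e₁ ha h22 h11 hb (Or.inl ?_)).le)
            rw [hp]
            have := htopo₁ _ _ e₂.2 ha h22
            rwa [hn] at this
          · simp [blockIdx, h11, h22, ha, hb] at hb2
        · simp [blockIdx, h11, h22, ha] at hb2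
          split_ifs at hb2 <;> omega
      · have hb1 := hble _ _ h1
        simp only [blockIdx, hv, if_false] at hb1
        split_ifs at hb1 <;> omega
end

section
/- Let D = (V, A) be a directed graph, H the associated signed graph (with special vertex s, checker vertices c_e for e ∈ A, alignment vertices a_v for v ∈ V; positive edges s c_e and c_{(v,w)} a_v; negative edges s a_v and c_{(v,w)} a_w), and let π be a feasible line embedding of H. Define V₁ = {v ∈ V : a_v <_π s} and V₂ = {v ∈ V : a_v >_π s}. Then π restricted to the alignment vertices of V₁ induces a reverse topological order on D[V₁] (i.e., if (v,w) is an arc with v,w ∈ V₁ then a_w <_π a_v), and in particular D[V₁] is acyclic; symmetrically, D[V₂] is acyclic. -/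
/-- Given a feasible line embedding `π` of the signed graph built from a
loopless digraph `(V, A)`, setting `V₁ = {v : a_v <_π s}` and
`V₂ = {v : a_v >_π s}`, the embedding induces a reverse topological order on
`D[V₁]` (arcs inside `V₁` go backwards among alignment vertices), a topological
order on `D[V₂]`, and both `D[V₁]` and `D[V₂]` are acyclic. -/
theorem feasible_embedding_gives_acyclic_partition
    {V : Type} [Fintype V] (A : V → V → Prop) (hirr : ∀ v, ¬ A v v)
    (π : HVert V A → ℕ) (hfeas : Feasible Hpos Hneg π) :
    (∀ v w : V, A v w →
        π (Sum.inr (Sum.inr v)) < π (Sum.inl ()) →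
        π (Sum.inr (Sum.inr w)) < π (Sum.inl ()) →
        π (Sum.inr (Sum.inr w)) < π (Sum.inr (Sum.inr v))) ∧
    (∀ v, ¬ Relation.TransGen
      (fun a b : V => A a b ∧
        π (Sum.inr (Sum.inr a)) < π (Sum.inl ()) ∧
        π (Sum.inr (Sum.inr b)) < π (Sum.inl ())) v v) ∧
    (∀ v, ¬ Relation.TransGen
      (fun a b : V => A a b ∧
        π (Sum.inl ()) < π (Sum.inr (Sum.inr a)) ∧
        π (Sum.inl ()) < π (Sum.inr (Sum.inr b))) v v) := by
  obtain ⟨hinj, h1, h2⟩ := hfeas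
  have key1 : ∀ v w : V, A v w →
      π (Sum.inr (Sum.inr v)) < π (Sum.inl ()) →
      π (Sum.inr (Sum.inr w)) < π (Sum.inl ()) →
      π (Sum.inr (Sum.inr w)) < π (Sum.inr (Sum.inr v)) := by
    intro v w hA hv hw
    set e : {p : V × V // A p.1 p.2} := ⟨(v, w), hA⟩ with he
    set s : HVert V A := Sum.inl () with hs
    set av : HVert V A := Sum.inr (Sum.inr v) with hav
    set aw : HVert V A := Sum.inr (Sum.inr w) with haw
    set ce : HVert V A := Sum.inr (Sum.inl e) with hce
    have hvw : v ≠ w := fun h => hirr v (h ▸ hA)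
    have hpav : Hpos av ce := Or.inr rfl
    have hnaw : Hneg aw ce := Or.inr rfl
    have hpsc : Hpos s ce := Or.inl trivial
    by_contra hc
    have hlt : π av < π aw := by
      rcases lt_trichotomy (π av) (π aw) with h | h | h
      · exact h
      · exact absurd (hinj h) (by simp [hav, haw, hvw])
      · exact absurd h hc
    rcases lt_trichotomy (π ce) (π s) with hcs | hcs | hcs
    · have hwc : π aw < π ce := by
        rcases lt_trichotomy (π aw) (π ce) with h | h | h
        · exact h
        · exact absurd (hinj h) (by simp [haw, hce])
        · exact absurd hnaw (h2 ce s aw h hw hpsc)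
      exact h1 ce av aw hlt hwc hpav hnaw
    · exact absurd (hinj hcs) (by simp [hce, hs])
    · exact h1 ce av aw hlt (lt_trans hw hcs) hpav hnaw
  have key2 : ∀ v w : V, A v w →
      π (Sum.inl ()) < π (Sum.inr (Sum.inr v)) →
      π (Sum.inl ()) < π (Sum.inr (Sum.inr w)) →
      π (Sum.inr (Sum.inr v)) < π (Sum.inr (Sum.inr w)) := by
    intro v w hA hv hw
    set e : {p : V × V // A p.1 p.2} := ⟨(v, w), hA⟩ with he
    set s : HVert V A := Sum.inl () with hs
    set av : HVert V A := Sum.inr (Sum.inr v) with hav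
    set aw : HVert V A := Sum.inr (Sum.inr w) with haw
    set ce : HVert V A := Sum.inr (Sum.inl e) with hce
    have hvw : v ≠ w := fun h => hirr v (h ▸ hA)
    have hpav : Hpos av ce := Or.inr rfl
    have hnaw : Hneg aw ce := Or.inr rfl
    have hpsc : Hpos s ce := Or.inl trivial
    by_contra hc
    have hlt : π aw < π av := by
      rcases lt_trichotomy (π aw) (π av) with h | h | h
      · exact h
      · exact absurd (hinj h) (by simp [hav, haw, hvw.symm])
      · exact absurd h hc
    rcases lt_trichotomy (π ce) (π s) with hcs | hcs | hcs
    · exact h2 ce av aw (lt_trans hcs hw) hlt hpav hnaw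
    · exact absurd (hinj hcs) (by simp [hce, hs])
    · have hwc : π ce < π aw := by
        rcases lt_trichotomy (π ce) (π aw) with h | h | h
        · exact h
        · exact absurd (hinj h) (by simp [haw, hce])
        · exact absurd hnaw (h1 ce s aw hw h hpsc)
      exact h2 ce av aw hwc hlt hpav hnaw
  refine ⟨key1, ?_, ?_⟩
  · intro v hcyc
    have mono : ∀ a b : V, Relation.TransGen
        (fun a b : V => A a b ∧
          π (Sum.inr (Sum.inr a)) < π (Sum.inl ()) ∧
          π (Sum.inr (Sum.inr b)) < π (Sum.inl ())) a b →
        π (Sum.inr (Sum.inr b)) < π (Sum.inr (Sum.inr a)) := by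
      intro a b h
      induction h with
      | single h => exact key1 _ _ h.1 h.2.1 h.2.2
      | tail _ hstep ih => exact lt_trans (key1 _ _ hstep.1 hstep.2.1 hstep.2.2) ih
    exact lt_irrefl _ (mono v v hcyc)
  · intro v hcyc
    have mono : ∀ a b : V, Relation.TransGen
        (fun a b : V => A a b ∧
          π (Sum.inl ()) < π (Sum.inr (Sum.inr a)) ∧
          π (Sum.inl ()) < π (Sum.inr (Sum.inr b))) a b →
        π (Sum.inr (Sum.inr a)) < π (Sum.inr (Sum.inr b)) := by
      intro a b h
      induction h with
      | single h => exact key2 _ _ h.1 h.2.1 h.2.2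
      | tail _ hstep ih => exact lt_trans ih (key2 _ _ hstep.1 hstep.2.1 hstep.2.2)
    exact lt_irrefl _ (mono v v hcyc)
end

section
/- Let (V, E⁺, E⁻) be a signed graph on n vertices. Define the directed graph D on the set W of pairs (v, X) with X ⊆ V, v ∉ X, and v good for X, with an arc from (v, X) to (v', X') iff X' = X ∪ {v}. Then (V, E⁺, E⁻) admits a feasible line embedding if and only if there exist vertices (u, ∅) and (v, V \ {v}) in W such that (v, V \ {v}) is reachable from (u, ∅) in D. -/
/-- The arc relation of the dynamic-programming digraph: from a good pair
`(v, X)` to a good pair `(v', X')` iff `X' = X ∪ {v}`. -/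
def DPStep {V : Type} (Ep En : V → V → Prop) (p q : V × Set V) : Prop :=
  Good Ep En p.2 p.1 ∧ Good Ep En q.2 q.1 ∧ q.2 = insert p.1 p.2

/-! A path `(u₁, ∅) → (u₂, {u₁}) → ⋯ → (uₙ, V \ {uₙ})` in the dynamic-programming digraph is the
same thing as an enumeration `u₁, …, uₙ` of `V` in which every vertex is good for the set of its
predecessors. Since `E⁺` is symmetric, the latter says exactly that the ordering is feasible, and
any feasible `π` yields such an enumeration by sorting `V` along `π`. -/

section

variable {V : Type} {Ep En : V → V → Prop}

variable (Ep En) in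
def GoodList (L : List V) : Prop :=
  ∀ i (hi : i < L.length), Good Ep En {x | x ∈ L.take i} L[i]

theorem goodList_append_singleton {L : List V} {a : V} :
    GoodList Ep En (L ++ [a]) ↔ GoodList Ep En L ∧ Good Ep En {x | x ∈ L} a := by
  constructor
  · intro h
    refine ⟨fun i hi => ?_, by simpa using h L.length (by simp)⟩
    have := h i (by simp; omega)
    rwa [List.take_append_of_le_length hi.le, List.getElem_append_left hi] at this
  · rintro ⟨hL, ha⟩ i hi
    rcases Nat.lt_or_eq_of_le (Nat.lt_succ_iff.mp (by simpa using hi)) with hi' | rfl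
    · simpa [List.take_append_of_le_length hi'.le, List.getElem_append_left hi'] using hL i hi'
    · simpa using ha

theorem goodList_singleton {a : V} : GoodList Ep En [a] ↔ Good Ep En ∅ a := by
  simp [GoodList]

theorem GoodList.nodup {L : List V} (h : GoodList Ep En L) : L.Nodup := by
  induction L using List.reverseRecOn with
  | nil => exact List.nodup_nil
  | append_singleton L a ih =>
    obtain ⟨hL, ha⟩ := goodList_append_singleton.mp h
    exact List.nodup_append.mpr ⟨ih hL, List.nodup_singleton a,
      fun x hx y hy => by rintro rfl; exact ha.1 (by simp_all)⟩

theorem reflTransGen_dpStep_of_goodList {u a : V} {L : List V} (h : GoodList Ep En (L ++ [a]))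
    (hu : (L ++ [a]).head? = some u) :
    Relation.ReflTransGen (DPStep Ep En) (u, ∅) (a, {x | x ∈ L}) := by
  induction L using List.reverseRecOn generalizing a with
  | nil =>
    obtain rfl : a = u := by simpa using hu
    simpa using Relation.ReflTransGen.refl
  | append_singleton L b ih =>
    obtain ⟨hLb, ha⟩ := goodList_append_singleton.mp h
    have hb := (goodList_append_singleton.mp hLb).2
    refine (ih hLb (by simpa using hu)).tail ⟨hb, ha, ?_⟩
    ext x
    simp [or_comm]

theorem exists_goodList_of_reflTransGen_dpStep {u : V} {p : V × Set V} (hu : Good Ep En ∅ u)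
    (h : Relation.ReflTransGen (DPStep Ep En) (u, ∅) p) :
    ∃ L : List V, p.2 = {x | x ∈ L} ∧ GoodList Ep En (L ++ [p.1]) := by
  induction h with
  | refl => exact ⟨[], by simp, goodList_singleton.mpr hu⟩
  | @tail b c _ hbc ih =>
    obtain ⟨L, hb, hL⟩ := ih
    obtain ⟨-, hc, hcb⟩ := hbc
    have hc' : c.2 = {x | x ∈ L ++ [b.1]} := by
      ext x
      simp [hcb, hb, or_comm]
    exact ⟨L ++ [b.1], hc', goodList_append_singleton.mpr ⟨hL, hc' ▸ hc⟩⟩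

theorem setOf_mem_eq_univ_diff_singleton_iff {L : List V} {a : V} (ha : a ∉ L) :
    {x | x ∈ L} = Set.univ \ {a} ↔ ∀ x, x ∈ L ++ [a] := by
  constructor
  · intro h x
    by_cases hx : x = a
    · simp [hx]
    · simpa [hx] using h.ge (by simp [hx] : x ∈ Set.univ \ {a})
  · intro h
    ext x
    by_cases hx : x = a
    · simp [hx, ha]
    · simpa [hx] using h x

theorem exists_reachable_iff_exists_goodList [Nonempty V] :
    (∃ u v : V, Good Ep En ∅ u ∧ Good Ep En (Set.univ \ {v}) v ∧
      Relation.ReflTransGen (DPStep Ep En) (u, ∅) (v, Set.univ \ {v})) ↔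
    ∃ M : List V, (∀ x, x ∈ M) ∧ GoodList Ep En M := by
  constructor
  · rintro ⟨u, v, hu, -, h⟩
    obtain ⟨L, hL, hgood⟩ := exists_goodList_of_reflTransGen_dpStep hu h
    have hv : v ∉ L := fun hvL => by simpa using hL.ge hvL
    exact ⟨L ++ [v], (setOf_mem_eq_univ_diff_singleton_iff hv).mp hL.symm, hgood⟩
  · rintro ⟨M, hall, hM⟩
    obtain rfl | ⟨L, v, rfl⟩ := M.eq_nil_or_concat'
    · exact (List.not_mem_nil (hall (Classical.arbitrary V))).elim
    obtain ⟨u, M', hu⟩ := List.exists_cons_of_ne_nil (List.concat_ne_nil v L)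
    have hv := (goodList_append_singleton.mp hM).2
    have hL := (setOf_mem_eq_univ_diff_singleton_iff hv.1).mpr hall
    refine ⟨u, v, ?_, hL ▸ hv, hL ▸ reflTransGen_dpStep_of_goodList hM (by simp [hu])⟩
    simpa [hu] using hM 0 (by simp)

theorem feasible_iff_forall_good (hsymp : ∀ u v, Ep u v → Ep v u) {π : V → ℕ} :
    Feasible Ep En π ↔ Function.Injective π ∧ ∀ v, Good Ep En {u | π u < π v} v := by
  constructor
  · rintro ⟨hinj, hleft, hright⟩
    have lt_of_not_lt {v w} (hw : ¬ π w < π v) (hwv : w ≠ v) : π v < π w :=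
      lt_of_le_of_ne (not_lt.mp hw) fun h => hwv (hinj h.symm)
    refine ⟨hinj, fun v => ⟨(lt_irrefl (π v) ·), ?_, ?_⟩⟩
    · intro w hw hvw z hz hzv hwz
      exact hright w z v hw (lt_of_not_lt hz hzv) (hsymp _ _ hwz) hvw
    · intro w hw hwv hvw z hz hwz
      exact hleft w z v hz (lt_of_not_lt hw hwv) (hsymp _ _ hwz) hvw
  · rintro ⟨hinj, hgood⟩
    refine ⟨hinj, fun u u₁ u₂ h₁ h₂ hp hn => ?_, fun u u₁ u₂ h₂ h₁ hp hn => ?_⟩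
    · exact (hgood u₂).2.2 u (lt_asymm h₂) (fun h => (h ▸ h₂).false) hn u₁ h₁ (hsymp _ _ hp)
    · exact (hgood u₂).2.1 u h₂ hn u₁ (lt_asymm h₁) (fun h => (h ▸ h₁).false) (hsymp _ _ hp)

theorem setOf_idxOf_lt_idxOf_getElem [DecidableEq V] {M : List V} (hM : M.Nodup) {i : ℕ}
    (hi : i < M.length) : {u | M.idxOf u < M.idxOf M[i]} = {u | u ∈ M.take i} := by
  ext u
  rw [Set.mem_ofPred_eq, Set.mem_ofPred_eq, hM.idxOf_getElem]
  by_cases hu : u ∈ M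
  · exact (List.mem_take_iff_idxOf_lt hu).symm
  · rw [List.idxOf_eq_length hu]
    exact iff_of_false hi.not_gt fun h => hu (List.mem_of_mem_take h)

theorem goodList_iff_forall_good_idxOf [DecidableEq V] {M : List V} (hM : M.Nodup)
    (hall : ∀ x, x ∈ M) :
    GoodList Ep En M ↔ ∀ v, Good Ep En {u | M.idxOf u < M.idxOf v} v := by
  constructor
  · intro h v
    have hv := List.idxOf_lt_length_of_mem (hall v)
    have := h _ hv
    rwa [← setOf_idxOf_lt_idxOf_getElem hM hv, List.getElem_idxOf] at this
  · intro h i hi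
    simpa [setOf_idxOf_lt_idxOf_getElem hM hi] using h M[i]

theorem List.Pairwise.idxOf_lt_idxOf_iff {β : Type*} [Preorder β] [DecidableEq V] {f : V → β}
    {M : List V} (hM : M.Pairwise (fun a b => f a < f b)) {a b : V} (ha : a ∈ M) (hb : b ∈ M) :
    M.idxOf a < M.idxOf b ↔ f a < f b := by
  have hlt {a b : V} (ha : a ∈ M) (hb : b ∈ M) (h : M.idxOf a < M.idxOf b) : f a < f b := by
    simpa using List.pairwise_iff_getElem.mp hM _ _ (List.idxOf_lt_length_of_mem ha)
      (List.idxOf_lt_length_of_mem hb) h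
  refine ⟨hlt ha hb, fun h => ?_⟩
  rcases lt_trichotomy (M.idxOf a) (M.idxOf b) with hab | hab | hab
  · exact hab
  · rw [List.idxOf_inj ha] at hab
    exact absurd (hab ▸ h) (lt_irrefl _)
  · exact absurd (hlt hb ha hab) (lt_asymm h)

theorem exists_pairwise_lt_of_injective [Fintype V] {β : Type*} [LinearOrder β] {f : V → β}
    (hf : Function.Injective f) : ∃ M : List V, (∀ x, x ∈ M) ∧ M.Pairwise (fun a b => f a < f b) := by
  let : LinearOrder V := LinearOrder.lift' f hf
  exact ⟨Finset.univ.sort, by simp, List.sortedLT_iff_pairwise.mp (Finset.sortedLT_sort _)⟩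

theorem exists_feasible_iff_exists_goodList [Fintype V] (hsymp : ∀ u v, Ep u v → Ep v u) :
    (∃ π : V → ℕ, Feasible Ep En π) ↔ ∃ M : List V, (∀ x, x ∈ M) ∧ GoodList Ep En M := by
  classical
  constructor
  · rintro ⟨π, hπ⟩
    obtain ⟨hinj, hgood⟩ := (feasible_iff_forall_good hsymp).mp hπ
    obtain ⟨M, hall, hsort⟩ := exists_pairwise_lt_of_injective hinj
    have hM : M.Nodup := hsort.imp fun h => ne_of_apply_ne π h.ne
    refine ⟨M, hall, (goodList_iff_forall_good_idxOf hM hall).mpr fun v => ?_⟩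
    convert hgood v using 2
    ext u
    exact hsort.idxOf_lt_idxOf_iff (hall u) (hall v)
  · rintro ⟨M, hall, hM⟩
    refine ⟨M.idxOf, (feasible_iff_forall_good hsymp).mpr ⟨fun a b h => ?_,
      (goodList_iff_forall_good_idxOf hM.nodup hall).mp hM⟩⟩
    exact (List.idxOf_inj (hall a)).mp h

end

theorem feasible_iff_dp_reachable_general
    {V : Type} [Fintype V] [Nonempty V] (Ep En : V → V → Prop)
    (hsymp : ∀ u v, Ep u v → Ep v u) :
    (∃ π : V → ℕ, Feasible Ep En π) ↔
    (∃ u v : V, Good Ep En ∅ u ∧ Good Ep En (Set.univ \ {v}) v ∧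
      Relation.ReflTransGen (DPStep Ep En) (u, ∅) (v, Set.univ \ {v})) :=
  (exists_feasible_iff_exists_goodList hsymp).trans exists_reachable_iff_exists_goodList.symm

/-- A signed graph admits a feasible line embedding iff in the
dynamic-programming digraph some sink `(v, V \ {v})` is reachable from some
source `(u, ∅)`. -/
theorem feasible_iff_dp_reachable
    {V : Type} [Fintype V] [Nonempty V] (Ep En : V → V → Prop)
    (hsymp : ∀ u v, Ep u v → Ep v u) (hsymn : ∀ u v, En u v → En v u)
    (hirrp : ∀ v, ¬ Ep v v) (hirrn : ∀ v, ¬ En v v)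
    (hdisj : ∀ u v, ¬ (Ep u v ∧ En u v)) :
    (∃ π : V → ℕ, Feasible Ep En π) ↔
    (∃ u v : V, Good Ep En ∅ u ∧ Good Ep En (Set.univ \ {v}) v ∧
      Relation.ReflTransGen (DPStep Ep En) (u, ∅) (v, Set.univ \ {v})) :=
  feasible_iff_dp_reachable_general Ep En hsymp
end

section
/- Let G = (V, E⁺, E⁻) be a complete signed graph with a feasible line embedding π, and for each v let v→ be the π-maximum of the closed positive neighbourhood of v. Then the map v ↦ v→ is monotone with respect to π: if v <_π w then v→ ≤_π w→. -/
/-- In a complete signed graph with a feasible line embedding, the map sending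
each vertex `v` to the π-last vertex `v→` of its closed positive neighbourhood
is monotone with respect to the ordering π. -/
theorem last_positive_neighbour_monotone
    {V : Type} [Fintype V] (Ep En : V → V → Prop)
    (hsymp : ∀ u v, Ep u v → Ep v u) (hsymn : ∀ u v, En u v → En v u)
    (hirrp : ∀ v, ¬ Ep v v) (hirrn : ∀ v, ¬ En v v)
    (hdisj : ∀ u v, ¬ (Ep u v ∧ En u v))
    (hcomplete : ∀ u v : V, u ≠ v → Ep u v ∨ En u v)
    (π : V → ℕ) (hfeas : Feasible Ep En π)
    (vr : V → V)
    (hvrmem : ∀ v, Ep v (vr v) ∨ vr v = v)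
    (hvrmax : ∀ v x : V, (Ep v x ∨ x = v) → π x ≤ π (vr v)) :
    ∀ v w : V, π v < π w → π (vr v) ≤ π (vr w) := by
  intro v w hvw
  obtain ⟨hinj, hf1, hf2⟩ := hfeas
  set a := vr v with ha
  rcases hvrmem v with hva | hav
  · -- Ep v a
    rcases le_or_gt (π a) (π w) with h | h
    · exact h.trans (hvrmax w w (Or.inr rfl))
    · -- π v < π w < π a, Ep v a
      have haw : a ≠ w := fun e => (lt_irrefl _ (e ▸ h))
      have hwa : Ep w a := by
        rcases hcomplete w a haw.symm with hp | hn
        · exact hp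
        · exact absurd hn (hf1 a v w hvw h hva)
      exact hvrmax w a (Or.inl hwa)
  · have : π a = π v := by simp [ha, hav]
    exact (this ▸ hvw.le).trans (hvrmax w w (Or.inr rfl))
end

section
/- Let (V, E⁺, E⁻) be a signed graph and π an ordering of V. If some vertex v is not good for the set X = {u : u <_π v}, then π is not a feasible line embedding: there exists a vertex w and vertices witnessing a violation of the condition imposed on w. -/
/-- If some vertex `v` is not good for the set of vertices preceding it in the
ordering π, then π is not a feasible line embedding: there exists a vertex `w`
together with two vertices witnessing a violation of the condition imposed on
`w`. -/
theorem not_good_gives_violation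
    {V : Type} [Fintype V] (Ep En : V → V → Prop)
    (hsymp : ∀ u v, Ep u v → Ep v u) (hsymn : ∀ u v, En u v → En v u)
    (hirrp : ∀ v, ¬ Ep v v) (hirrn : ∀ v, ¬ En v v)
    (hdisj : ∀ u v, ¬ (Ep u v ∧ En u v))
    (π : V → ℕ) (hinj : Function.Injective π)
    (v : V) (hbad : ¬ Good Ep En {u : V | π u < π v} v) :
    ∃ w w₁ w₂ : V,
      (π w₁ < π w₂ ∧ π w₂ < π w ∧ Ep w₁ w ∧ En w₂ w) ∨
      (π w < π w₂ ∧ π w₂ < π w₁ ∧ Ep w₁ w ∧ En w₂ w) := by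
  rw [Good] at hbad
  push_neg at hbad
  have hv : v ∉ {u : V | π u < π v} := by simp
  by_cases hc2 : ∀ w ∈ {u : V | π u < π v}, En v w → ∀ z ∉ {u : V | π u < π v}, z ≠ v → ¬Ep w z
  case neg =>
    push_neg at hc2
    obtain ⟨w, hwX, hnvw, z, hzX, hzv, hep⟩ := hc2
    have hzgt : π v < π z := by
      rcases lt_trichotomy (π z) (π v) with h | h | h
      · exact absurd h hzX
      · exact absurd (hinj h) hzv
      · exact h
    exact ⟨w, z, v, Or.inr ⟨hwX, hzgt, hsymp _ _ hep, hnvw⟩⟩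
  case pos =>
    obtain ⟨w, hwX, hwv, hnvw, z, hzX, hep⟩ := hbad hv hc2
    have hwgt : π v < π w := by
      rcases lt_trichotomy (π w) (π v) with h | h | h
      · exact absurd h hwX
      · exact absurd (hinj h) hwv
      · exact h
    exact ⟨w, z, v, Or.inl ⟨hzX, hwgt, hsymp _ _ hep, hnvw⟩⟩
end

section
/- Let (V, E⁺, E⁻) be a complete signed graph that admits a feasible line embedding. Then the positive part G⁺ = (V, E⁺) is a chordal graph: every cycle in G⁺ of length at least 4 has a chord. -/
theorem Feasible.ep_of_common_left_neighbor {V : Type} {Ep En : V → V → Prop} {π : V → ℕ}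
    (hfeas : Feasible Ep En π) (hsymp : ∀ u v, Ep u v → Ep v u)
    (hcomplete : ∀ u v : V, u ≠ v → Ep u v ∨ En u v) {v a b : V}
    (ha : π v < π a) (hb : π v < π b) (hva : Ep v a) (hvb : Ep v b) (hab : a ≠ b) :
    Ep a b := by
  obtain ⟨hinj, hleft, -⟩ := hfeas
  rcases lt_or_gt_of_ne (hinj.ne hab) with h | h
  · exact (hcomplete a b hab).resolve_right (hleft b v a ha h hvb)
  · exact hsymp _ _ ((hcomplete b a hab.symm).resolve_right (hleft a v b hb h hva))

theorem List.exists_nonconsecutive_cycle_neighbors {V : Type} {R : V → V → Prop}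
    (hR : ∀ u v, R u v → R v u) {l : List V} (hlen : 4 ≤ l.length) (hchain : l.IsChain R)
    (hclose : ∀ h : l ≠ [], R (l.getLast h) (l.head h)) (k : Fin l.length) :
    ∃ i j : Fin l.length, i < j ∧ (j : ℕ) ≠ (i : ℕ) + 1 ∧
      ¬ ((i : ℕ) = 0 ∧ (j : ℕ) = l.length - 1) ∧
      i ≠ k ∧ j ≠ k ∧ R (l.get k) (l.get i) ∧ R (l.get k) (l.get j) := by
  have hstep : ∀ (m : ℕ) (h : m + 1 < l.length), R l[m] l[m + 1] :=
    List.isChain_iff_getElem.mp hchain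
  have hwrap : R l[l.length - 1] l[0] := by
    simpa only [List.getLast_eq_getElem, List.head_eq_getElem] using
      hclose (List.ne_nil_of_length_pos (by omega))
  obtain ⟨k, hk⟩ := k
  simp only [List.get_eq_getElem, Fin.ext_iff, Fin.lt_def, ne_eq]
  rcases Nat.eq_zero_or_pos k with rfl | hk0
  · refine ⟨⟨1, by omega⟩, ⟨l.length - 1, by omega⟩, ?_, ?_, ?_, ?_, ?_,
      hstep 0 (by omega), hR _ _ hwrap⟩ <;> dsimp only <;> omega
  rcases Nat.lt_or_ge (k + 1) l.length with hk1 | hk1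
  · have hprev := hstep (k - 1) (by omega)
    simp only [Nat.sub_add_cancel hk0] at hprev
    refine ⟨⟨k - 1, by omega⟩, ⟨k + 1, by omega⟩, ?_, ?_, ?_, ?_, ?_,
      hR _ _ hprev, hstep k hk1⟩ <;> dsimp only <;> omega
  · obtain rfl : k = l.length - 1 := by omega
    have hprev := hstep (l.length - 2) (by omega)
    simp only [show l.length - 2 + 1 = l.length - 1 by omega] at hprev
    refine ⟨⟨0, by omega⟩, ⟨l.length - 2, by omega⟩, ?_, ?_, ?_, ?_, ?_,
      hwrap, hR _ _ hprev⟩ <;> dsimp only <;> omega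

theorem complete_embeddable_positive_part_chordal_general
    {V : Type} (Ep En : V → V → Prop)
    (hsymp : ∀ u v, Ep u v → Ep v u)
    (hcomplete : ∀ u v : V, u ≠ v → Ep u v ∨ En u v)
    (π : V → ℕ) (hfeas : Feasible Ep En π) :
    ∀ (c : List V), c.Nodup → 4 ≤ c.length →
      List.Chain' Ep c →
      (∀ (h : c ≠ []), Ep (c.getLast h) (c.head h)) →
      ∃ i j : Fin c.length, i < j ∧ (j : ℕ) ≠ (i : ℕ) + 1 ∧
        ¬ ((i : ℕ) = 0 ∧ (j : ℕ) = c.length - 1) ∧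
        Ep (c.get i) (c.get j) := by
  intro c hnodup hlen hchain hclose
  have : Nonempty (Fin c.length) := ⟨⟨0, by omega⟩⟩
  obtain ⟨k, hk⟩ := Finite.exists_min fun l : Fin c.length => π (c.get l)
  have hmin : ∀ l, l ≠ k → π (c.get k) < π (c.get l) := fun l hl =>
    (hk l).lt_of_ne fun h => hl (hnodup.get_inj_iff.mp (hfeas.1 h)).symm
  obtain ⟨i, j, hij, hnext, hends, hik, hjk, hki, hkj⟩ :=
    List.exists_nonconsecutive_cycle_neighbors hsymp hlen hchain hclose k
  exact ⟨i, j, hij, hnext, hends, hfeas.ep_of_common_left_neighbor hsymp hcomplete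
    (hmin i hik) (hmin j hjk) hki hkj (hnodup.get_inj_iff.not.mpr hij.ne)⟩

/-- If a complete signed graph admits a feasible line embedding, then its
positive part is chordal: every cycle of length at least 4 (given as a list of
pairwise distinct vertices, consecutive ones adjacent, and the last adjacent to
the first) has a chord, i.e. a positive edge between two non-consecutive
vertices of the cycle. -/
theorem complete_embeddable_positive_part_chordal
    {V : Type} [Fintype V] (Ep En : V → V → Prop)
    (hsymp : ∀ u v, Ep u v → Ep v u) (hsymn : ∀ u v, En u v → En v u)
    (hirrp : ∀ v, ¬ Ep v v) (hirrn : ∀ v, ¬ En v v)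
    (hdisj : ∀ u v, ¬ (Ep u v ∧ En u v))
    (hcomplete : ∀ u v : V, u ≠ v → Ep u v ∨ En u v)
    (π : V → ℕ) (hfeas : Feasible Ep En π) :
    ∀ (c : List V), c.Nodup → 4 ≤ c.length →
      List.Chain' Ep c →
      (∀ (h : c ≠ []), Ep (c.getLast h) (c.head h)) →
      ∃ i j : Fin c.length, i < j ∧ (j : ℕ) ≠ (i : ℕ) + 1 ∧
        ¬ ((i : ℕ) = 0 ∧ (j : ℕ) = c.length - 1) ∧
        Ep (c.get i) (c.get j) :=
  complete_embeddable_positive_part_chordal_general Ep En hsymp hcomplete π hfeas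
end
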